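/- arXiv:1807.02702 — 7 statements merged into one kernel-verified Lean document; each statement's English description precedes it below -/
import Mathlib

section
/- Let π ∈ Av^k(231) with k ≥ 1 and set m = indmax(π). Then for every permutation σ ∈ Avⁿ(231) with n ≥ 1, writing ℓ = indmax(σ), one has c-occ(π,σ) = c-occ(π,σ_L) + c-occ(π,σ_R) + 𝟙{ [ℓ−m+1, ℓ+k−m] ⊆ [1,n] and pat_{[ℓ−m+1,ℓ+k−m]}(σ) = π }. -/
open Finset Filter
open scoped Topology Classical

noncomputable section

/-- The permutation 231 (as a permutation of `Fin 3`, 0-indexed). -/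
def perm231 : Equiv.Perm (Fin 3) := ⟨![1, 2, 0], ![2, 0, 1], by decide, by decide⟩

/-- The permutation 321 (as a permutation of `Fin 3`, 0-indexed). -/
def perm321 : Equiv.Perm (Fin 3) := ⟨![2, 1, 0], ![2, 1, 0], by decide, by decide⟩

/-- `σ` contains the pattern `π`: some (not necessarily consecutive) subsequence of `σ`
is in the same relative order as `π`. -/
def Contains {k n : ℕ} (π : Equiv.Perm (Fin k)) (σ : Equiv.Perm (Fin n)) : Prop :=
  ∃ f : Fin k → Fin n, StrictMono f ∧ ∀ a b : Fin k, σ (f a) < σ (f b) ↔ π a < π b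

/-- `σ` avoids the pattern `π`. -/
def Avoids {k n : ℕ} (π : Equiv.Perm (Fin k)) (σ : Equiv.Perm (Fin n)) : Prop := ¬ Contains π σ

/-- The set `Avⁿ(ρ)` of `ρ`-avoiding permutations of size `n`. -/
def AvSet {k : ℕ} (ρ : Equiv.Perm (Fin k)) (n : ℕ) : Finset (Equiv.Perm (Fin n)) :=
  Finset.univ.filter fun σ => Avoids ρ σ

/-- The (0-indexed) value of `σ` at the (0-indexed) position `j`, with junk value `0`
out of range. -/
def pv {n : ℕ} (σ : Equiv.Perm (Fin n)) (j : ℕ) : ℕ :=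
  if h : j < n then (σ ⟨j, h⟩ : ℕ) else 0

/-- The length-`k` window of `σ` starting at the (0-indexed) position `i` is in the same
relative order as `π`, i.e. `pat_{[i+1,i+k]}(σ) = π` (in the 1-indexed notation). -/
def WindowMatch {k n : ℕ} (π : Equiv.Perm (Fin k)) (σ : Equiv.Perm (Fin n)) (i : ℕ) : Prop :=
  ∀ a b : Fin k, (pv σ (i + a) < pv σ (i + b) ↔ π a < π b)

/-- `π` occurs consecutively in `σ` at the (0-indexed) position `i`. -/
def IsOccAt {k n : ℕ} (π : Equiv.Perm (Fin k)) (σ : Equiv.Perm (Fin n)) (i : ℕ) : Prop :=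
  i + k ≤ n ∧ WindowMatch π σ i

/-- Number of consecutive occurrences of `π` in the (0-indexed) window `[lo, hi)` of `σ`.
This equals `c-occ(π, pat_{[lo+1,hi]}(σ))` in the notation of the paper. -/
def cOccWin {k n : ℕ} (π : Equiv.Perm (Fin k)) (σ : Equiv.Perm (Fin n)) (lo hi : ℕ) : ℕ :=
  ((Finset.range n).filter fun i => lo ≤ i ∧ i + k ≤ hi ∧ WindowMatch π σ i).card

/-- `c-occ(π,σ)`: the number of consecutive occurrences of `π` in `σ`. -/
def cOcc {k n : ℕ} (π : Equiv.Perm (Fin k)) (σ : Equiv.Perm (Fin n)) : ℕ := cOccWin π σ 0 n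

/-- `|LRMax(π)|`: the number of left-to-right maxima of `π`. -/
def lrMax {k : ℕ} (π : Equiv.Perm (Fin k)) : ℕ :=
  (Finset.univ.filter fun i : Fin k => ∀ j : Fin k, j < i → π j < π i).card

/-- `|RLMax(π)|`: the number of right-to-left maxima of `π`. -/
def rlMax {k : ℕ} (π : Equiv.Perm (Fin k)) : ℕ :=
  (Finset.univ.filter fun i : Fin k => ∀ j : Fin k, i < j → π j < π i).card

/-- `P_231(π) = 2^(|LRMax(π)| + |RLMax(π)|) / 2^(2|π|)`. -/
def P231 {k : ℕ} (π : Equiv.Perm (Fin k)) : ℝ :=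
  2 ^ (lrMax π + rlMax π) / 2 ^ (2 * k)

end

/-- **Lemma 4.5 (basic recursion).** Let `π ∈ Av^k(231)` with `k ≥ 1` and `m = indmax(π)`,
and let `σ ∈ Avⁿ(231)` with `n ≥ 1` and `ℓ = indmax(σ)` (all indices here 0-indexed, so
`σ ℓ = n-1` is the maximum value and `π m = k-1`).  Then
`c-occ(π,σ) = c-occ(π,σ_L) + c-occ(π,σ_R) + 𝟙{[ℓ−m+1,ℓ+k−m] ⊆ [1,n] ∧ pat = π}`,
where `σ_L` (resp. `σ_R`) is the pattern of `σ` before (resp. after) its maximum, so that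
`c-occ(π,σ_L) = cOccWin π σ 0 ℓ` and `c-occ(π,σ_R) = cOccWin π σ (ℓ+1) n`. -/
theorem cOcc_recursion_231
    {k n : ℕ} (hk : 1 ≤ k) (hn : 1 ≤ n)
    (π : Equiv.Perm (Fin k)) (hπ : Avoids perm231 π)
    (σ : Equiv.Perm (Fin n)) (hσ : Avoids perm231 σ)
    (m ℓ : ℕ) (hm : m < k) (hℓ : ℓ < n)
    (hmaxπ : (π ⟨m, hm⟩ : ℕ) = k - 1) (hmaxσ : (σ ⟨ℓ, hℓ⟩ : ℕ) = n - 1) :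
    cOcc π σ = cOccWin π σ 0 ℓ + cOccWin π σ (ℓ + 1) n
      + (if m ≤ ℓ ∧ IsOccAt π σ (ℓ - m) then 1 else 0) := by

  classical
  -- Key: if a window containing position ℓ matches π, the max sits at offset m.
  have key : ∀ i : ℕ, i + k ≤ n → WindowMatch π σ i → i ≤ ℓ → ℓ < i + k →
      ℓ - i = m := by
    intro i hik hW hil hli
    have ha : ℓ - i < k := by omega
    set a : Fin k := ⟨ℓ - i, ha⟩ with hadef
    have hia : i + (a : ℕ) = ℓ := by simp [hadef]; omega
    have hpa : pv σ (i + (a : ℕ)) = n - 1 := by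
      rw [hia]; unfold pv; rw [dif_pos hℓ]; exact hmaxσ
    have hmax : ∀ b : Fin k, b ≠ a → π b < π a := by
      intro b hb
      rw [← hW b a]
      have hbn : i + (b : ℕ) < n := by have := b.isLt; omega
      have hpb : pv σ (i + (b : ℕ)) = (σ ⟨i + b, hbn⟩ : ℕ) := by
        unfold pv; rw [dif_pos hbn]
      rw [hpa, hpb]
      have hne : (⟨i + (b : ℕ), hbn⟩ : Fin n) ≠ ⟨ℓ, hℓ⟩ := by
        intro h
        apply hb
        have hv := congrArg Fin.val h
        simp at hv
        apply Fin.ext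
        simp [hadef]
        omega
      have hne2 := σ.injective.ne hne
      have h1 : (σ ⟨i + (b : ℕ), hbn⟩ : ℕ) < n := (σ _).isLt
      have h2 : (σ ⟨i + (b : ℕ), hbn⟩ : ℕ) ≠ n - 1 := by
        intro h
        exact hne2 (Fin.ext (by rw [h, hmaxσ]))
      omega
    by_contra hnem
    have ham : (⟨m, hm⟩ : Fin k) ≠ a := by
      intro h
      exact hnem (by have := congrArg Fin.val h; simp [hadef] at this; omega)
    have h2 := hmax ⟨m, hm⟩ ham
    have h3 : (π a : ℕ) < k := (π a).isLt
    have h4 : π a ≠ π ⟨m, hm⟩ := π.injective.ne (Ne.symm ham)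
    have h5 : (π a : ℕ) ≠ k - 1 := by
      intro h
      exact h4 (Fin.ext (by rw [h, hmaxπ]))
    have h6 : (π a : ℕ) < (π ⟨m, hm⟩ : ℕ) := by rw [hmaxπ]; omega
    exact absurd h6 (not_lt.2 (le_of_lt h2))
  -- partition of the set of occurrences
  set B : Finset ℕ :=
    (Finset.range n).filter (fun i => 0 ≤ i ∧ i + k ≤ ℓ ∧ WindowMatch π σ i) with hB
  set C : Finset ℕ :=
    (Finset.range n).filter (fun i => ℓ + 1 ≤ i ∧ i + k ≤ n ∧ WindowMatch π σ i) with hC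
  set D : Finset ℕ :=
    (Finset.range n).filter
      (fun i => i = ℓ - m ∧ m ≤ ℓ ∧ (ℓ - m) + k ≤ n ∧ WindowMatch π σ (ℓ - m)) with hD
  have hunion :
      (Finset.range n).filter (fun i => 0 ≤ i ∧ i + k ≤ n ∧ WindowMatch π σ i)
        = B ∪ (C ∪ D) := by
    ext i
    simp only [hB, hC, hD, Finset.mem_union, Finset.mem_filter, Finset.mem_range]
    constructor
    · rintro ⟨hin, -, hik, hW⟩
      by_cases h1 : i + k ≤ ℓ
      · exact Or.inl ⟨hin, Nat.zero_le i, h1, hW⟩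
      · by_cases h2 : ℓ + 1 ≤ i
        · exact Or.inr (Or.inl ⟨hin, h2, hik, hW⟩)
        · have hil : i ≤ ℓ := by omega
          have hli : ℓ < i + k := by omega
          have hkey := key i hik hW hil hli
          have hieq : i = ℓ - m := by omega
          refine Or.inr (Or.inr ⟨hin, hieq, by omega, by omega, ?_⟩)
          rwa [← hieq]
    · rintro (⟨hin, -, h1, hW⟩ | ⟨hin, h1, h2, hW⟩ | ⟨hin, hieq, hmℓ, h2, hW⟩)
      · exact ⟨hin, Nat.zero_le i, by omega, hW⟩
      · exact ⟨hin, Nat.zero_le i, h2, hW⟩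
      · exact ⟨hin, Nat.zero_le i, by omega, by rwa [hieq]⟩
  have hdBC : Disjoint B (C ∪ D) := by
    rw [Finset.disjoint_left]
    intro i hiB hiCD
    simp only [hB, hC, hD, Finset.mem_union, Finset.mem_filter, Finset.mem_range] at hiB hiCD
    rcases hiCD with ⟨-, h1, -, -⟩ | ⟨-, hieq, hmℓ, -, -⟩
    · omega
    · have : ℓ - (ℓ - m) = m := by omega
      omega
  have hdCD : Disjoint C D := by
    rw [Finset.disjoint_left]
    intro i hiC hiD
    simp only [hC, hD, Finset.mem_filter, Finset.mem_range] at hiC hiD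
    omega
  have hDcard : D.card = (if m ≤ ℓ ∧ IsOccAt π σ (ℓ - m) then 1 else 0) := by
    by_cases hcond : m ≤ ℓ ∧ IsOccAt π σ (ℓ - m)
    · rw [if_pos hcond]
      obtain ⟨hmℓ, hocc1, hocc2⟩ := hcond
      have : D = {ℓ - m} := by
        ext i
        simp only [hD, Finset.mem_filter, Finset.mem_range, Finset.mem_singleton]
        constructor
        · rintro ⟨-, h, -⟩; exact h
        · rintro rfl
          exact ⟨by omega, rfl, hmℓ, hocc1, hocc2⟩
      rw [this, Finset.card_singleton]
    · rw [if_neg hcond]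
      have : D = ∅ := by
        ext i
        simp only [hD, Finset.mem_filter, Finset.mem_range, Finset.notMem_empty,
          iff_false, not_and]
        intro hin hieq hmℓ h1 h2
        exact hcond ⟨hmℓ, h1, h2⟩
      rw [this, Finset.card_empty]
  show cOccWin π σ 0 n = _
  unfold cOccWin
  rw [hunion, Finset.card_union_of_disjoint hdBC, Finset.card_union_of_disjoint hdCD,
    ← hB, ← hC, hDcard, Nat.add_assoc]
end

section
/- Let π be a permutation of size k and σ a permutation of size n with k < n. Then c-occ(π,σ) = Σ_{m=1}^{k+1} c-occ(π^{*m}, σ) + 𝟙{ pat_{[n−k+1,n]}(σ) = π }. -/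
open Finset Filter
open scoped Topology Classical

noncomputable section

/-- `π^{*m}` (with `m : Fin (k+1)` the 0-indexed version of `1 ≤ m ≤ k+1`):
the permutation of size `k+1` obtained from `π` by appending a new last entry of
(0-indexed) value `m` and shifting up by one all old values `≥ m`.
Concretely `(π^{*m}) i = π i + 𝟙{π i ≥ m}` for `i < k`, and `(π^{*m}) k = m`. -/
def starExt {k : ℕ} (π : Equiv.Perm (Fin k)) (m : Fin (k + 1)) : Equiv.Perm (Fin (k + 1)) :=
  finSuccEquivLast.trans ((Equiv.optionCongr π).trans (finSuccEquiv' m).symm)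

end

-- auxiliary lemmas to be inserted before the theorem
section Aux
variable {k n : ℕ}

lemma starExt_apply_castSucc (π : Equiv.Perm (Fin k)) (m : Fin (k + 1)) (a : Fin k) :
    starExt π m a.castSucc = m.succAbove (π a) := by
  simp [starExt, finSuccEquivLast_castSucc, finSuccEquiv'_symm_some]

lemma starExt_apply_last (π : Equiv.Perm (Fin k)) (m : Fin (k + 1)) :
    starExt π m (Fin.last k) = m := by
  simp [starExt, finSuccEquivLast_last, finSuccEquiv'_symm_none]

lemma pv_ne (σ : Equiv.Perm (Fin n)) {j1 j2 : ℕ} (h1 : j1 < n) (h2 : j2 < n) (h : j1 ≠ j2) :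
    pv σ j1 ≠ pv σ j2 := by
  simp only [pv, dif_pos h1, dif_pos h2]
  intro he
  exact h (by simpa using congrArg Fin.val (σ.injective (Fin.val_injective he)))

/-- From a starExt window match, extract the base window match. -/
lemma windowMatch_of_starExt {π : Equiv.Perm (Fin k)} {σ : Equiv.Perm (Fin n)}
    {m : Fin (k + 1)} {i : ℕ} (hw : WindowMatch (starExt π m) σ i) :
    WindowMatch π σ i := by
  intro a b
  have := hw a.castSucc b.castSucc
  simpa [starExt_apply_castSucc, Fin.succAbove_lt_succAbove_iff] using this

/-- The key characterization of the added value `m` from a starExt window match. -/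
lemma starExt_match_iff {π : Equiv.Perm (Fin k)} {σ : Equiv.Perm (Fin n)}
    {m : Fin (k + 1)} {i : ℕ} (hw : WindowMatch (starExt π m) σ i) (a : Fin k) :
    pv σ (i + a) < pv σ (i + k) ↔ (π a).castSucc < m := by
  have := hw a.castSucc (Fin.last k)
  simpa [starExt_apply_castSucc, starExt_apply_last,
    Fin.succAbove_lt_iff_castSucc_lt] using this

lemma fin_eq_of_castSucc_lt_iff {m m' : Fin (k + 1)}
    (h : ∀ v : Fin k, v.castSucc < m ↔ v.castSucc < m') : m = m' := by
  by_contra hne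
  rcases Fin.lt_or_lt_of_ne hne with hlt | hlt
  · have hv : (m : ℕ) < k := lt_of_lt_of_le hlt (Nat.lt_succ_iff.mp m'.isLt)
    have hcs : (⟨(m : ℕ), hv⟩ : Fin k).castSucc = m := by ext; simp
    have := (h ⟨(m : ℕ), hv⟩).mpr (by rw [hcs]; exact hlt)
    rw [hcs] at this; exact lt_irrefl _ this
  · have hv : (m' : ℕ) < k := lt_of_lt_of_le hlt (Nat.lt_succ_iff.mp m.isLt)
    have hcs : (⟨(m' : ℕ), hv⟩ : Fin k).castSucc = m' := by ext; simp
    have := (h ⟨(m' : ℕ), hv⟩).mp (by rw [hcs]; exact hlt)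
    rw [hcs] at this; exact lt_irrefl _ this

/-- Uniqueness of `m`. -/
lemma starExt_match_unique {π : Equiv.Perm (Fin k)} {σ : Equiv.Perm (Fin n)}
    {m m' : Fin (k + 1)} {i : ℕ}
    (hw : WindowMatch (starExt π m) σ i) (hw' : WindowMatch (starExt π m') σ i) :
    m = m' := by
  apply fin_eq_of_castSucc_lt_iff
  intro v
  have h1 := starExt_match_iff hw (π.symm v)
  have h2 := starExt_match_iff hw' (π.symm v)
  simp only [Equiv.apply_symm_apply] at h1 h2
  rw [← h1, h2]

/-- Existence of `m`. -/
lemma starExt_match_exists {π : Equiv.Perm (Fin k)} {σ : Equiv.Perm (Fin n)}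
    {i : ℕ} (hi : i + (k + 1) ≤ n) (hw : WindowMatch π σ i) :
    ∃ m : Fin (k + 1), WindowMatch (starExt π m) σ i := by
  classical
  set Qs : Finset (Fin k) :=
    Finset.univ.filter (fun v => pv σ (i + (π.symm v : ℕ)) < pv σ (i + k)) with hQs
  -- Qs is downward closed
  have hdc : ∀ v v' : Fin k, v' ≤ v → v ∈ Qs → v' ∈ Qs := by
    intro v v' hle hv
    rcases eq_or_lt_of_le hle with rfl | hlt
    · exact hv
    · simp only [hQs, Finset.mem_filter, Finset.mem_univ, true_and] at hv ⊢
      have : pv σ (i + (π.symm v' : ℕ)) < pv σ (i + (π.symm v : ℕ)) := by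
        rw [hw (π.symm v') (π.symm v)]
        simpa using hlt
      exact this.trans hv
  have hcard : Qs.card ≤ k := le_trans (Finset.card_filter_le _ _) (by simp)
  set m : Fin (k + 1) := ⟨Qs.card, Nat.lt_succ_of_le hcard⟩ with hm
  -- membership iff rank
  have hrank : ∀ v : Fin k, (v : ℕ) < Qs.card ↔ v ∈ Qs := by
    intro v
    constructor
    · intro hlt
      by_contra hnv
      have hsub : Qs ⊆ Finset.Iio v := by
        intro x hx
        simp only [Finset.mem_Iio]
        by_contra hxv
        exact hnv (hdc x v (not_lt.mp hxv) hx)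
      have := Finset.card_le_card hsub
      rw [Fin.card_Iio] at this
      omega
    · intro hv
      have hsub : Finset.Iic v ⊆ Qs := fun x hx => hdc v x (Finset.mem_Iic.mp hx) hv
      have := Finset.card_le_card hsub
      rw [Fin.card_Iic] at this
      omega
  -- the key iff
  have hkey : ∀ a : Fin k, pv σ (i + a) < pv σ (i + k) ↔ (π a).castSucc < m := by
    intro a
    have : (π a).castSucc < m ↔ ((π a : ℕ) < Qs.card) := by
      simp [Fin.lt_def, hm]
    rw [this, hrank (π a)]
    simp [hQs]
  refine ⟨m, ?_⟩
  -- distinctness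
  have hd : ∀ a : Fin k, pv σ (i + a) ≠ pv σ (i + k) := by
    intro a
    exact pv_ne σ (by omega) (by omega) (by omega)
  intro a b
  induction a using Fin.lastCases with
  | last =>
    induction b using Fin.lastCases with
    | last => simp
    | cast b =>
      simp only [starExt_apply_castSucc, starExt_apply_last, Fin.coe_castSucc, Fin.val_last]
      rw [Fin.lt_succAbove_iff_le_castSucc,
        show (m ≤ (π b).castSucc) ↔ ¬((π b).castSucc < m) from not_lt.symm, ← hkey b]
      have := hd b
      omega
  | cast a =>
    induction b using Fin.lastCases with
    | last =>
      simp only [starExt_apply_castSucc, starExt_apply_last, Fin.coe_castSucc, Fin.val_last]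
      rw [Fin.succAbove_lt_iff_castSucc_lt]
      exact hkey a
    | cast b =>
      simp only [starExt_apply_castSucc, Fin.coe_castSucc,
        Fin.succAbove_lt_succAbove_iff]
      exact hw a b

end Aux

/-- **Equation (2.2).** For a pattern `π` of size `k` and a permutation `σ` of size `n > k`,
`c-occ(π,σ) = Σ_{m=1}^{k+1} c-occ(π^{*m},σ) + 𝟙{pat_{[n−k+1,n]}(σ) = π}`. -/
theorem cOcc_eq_sum_starExt
    {k n : ℕ} (hk : 1 ≤ k) (hkn : k < n)
    (π : Equiv.Perm (Fin k)) (σ : Equiv.Perm (Fin n)) :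
    cOcc π σ = (∑ m : Fin (k + 1), cOcc (starExt π m) σ)
      + (if IsOccAt π σ (n - k) then 1 else 0) := by
  classical
  set S := (Finset.range n).filter (fun i => 0 ≤ i ∧ i + k ≤ n ∧ WindowMatch π σ i)
    with hSdef
  have hcOcc : cOcc π σ = S.card := rfl
  set T : Fin (k + 1) → Finset ℕ := fun m =>
    (Finset.range n).filter (fun i => 0 ≤ i ∧ i + (k + 1) ≤ n ∧ WindowMatch (starExt π m) σ i)
    with hTdef
  have hcT : ∀ m, cOcc (starExt π m) σ = (T m).card := fun m => rfl
  have hsplit := Finset.card_filter_add_card_filter_not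
    (s := S) (p := fun i => i + (k + 1) ≤ n)
  have hbi : S.filter (fun i => i + (k + 1) ≤ n) = Finset.univ.biUnion T := by
    ext i
    simp only [hSdef, hTdef, Finset.mem_filter, Finset.mem_biUnion, Finset.mem_univ,
      Finset.mem_range, true_and]
    constructor
    · rintro ⟨⟨hin, -, hik, hw⟩, hik1⟩
      obtain ⟨m, hm⟩ := starExt_match_exists hik1 hw
      exact ⟨m, hin, Nat.zero_le _, hik1, hm⟩
    · rintro ⟨m, hin, -, hik1, hw⟩
      exact ⟨⟨hin, Nat.zero_le _, by omega, windowMatch_of_starExt hw⟩, hik1⟩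
  have hdisj : ∀ m ∈ (Finset.univ : Finset (Fin (k + 1))), ∀ m' ∈ Finset.univ,
      m ≠ m' → Disjoint (T m) (T m') := by
    intro m _ m' _ hne
    rw [Finset.disjoint_left]
    intro i hi hi'
    simp only [hTdef, Finset.mem_filter] at hi hi'
    exact hne (starExt_match_unique hi.2.2.2 hi'.2.2.2)
  have hsecond : S.filter (fun i => ¬ i + (k + 1) ≤ n)
      = if IsOccAt π σ (n - k) then {n - k} else ∅ := by
    ext i
    constructor
    · intro hi
      simp only [hSdef, Finset.mem_filter, Finset.mem_range] at hi
      obtain ⟨⟨hin, -, hik, hw⟩, hik1⟩ := hi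
      have hieq : i = n - k := by omega
      subst hieq
      rw [if_pos ⟨by omega, hw⟩, Finset.mem_singleton]
    · intro hi
      by_cases hocc : IsOccAt π σ (n - k)
      · rw [if_pos hocc, Finset.mem_singleton] at hi
        subst hi
        simp only [hSdef, Finset.mem_filter, Finset.mem_range]
        exact ⟨⟨by omega, Nat.zero_le _, by omega, hocc.2⟩, by omega⟩
      · rw [if_neg hocc] at hi
        exact absurd hi (Finset.notMem_empty _)
  rw [hcOcc, ← hsplit, hbi, Finset.card_biUnion hdisj, hsecond]
  have hsum : ∑ m, (T m).card = ∑ m : Fin (k + 1), cOcc (starExt π m) σ :=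
    Finset.sum_congr rfl (fun m _ => (hcT m).symm)
  rw [hsum]
  congr 1
  split <;> simp
end

section
/- Fix k ≥ 1. (i) For every ℓ with 1 ≤ ℓ ≤ k−1, the number of permutations π of size k such that π⁻¹ has exactly one descent and that descent is at position ℓ equals C(k,ℓ) − 1, and every such π avoids the pattern 321. (ii) Consequently, the number of permutations π of size k whose inverse has exactly one descent equals 2^k − (k+1), and hence Σ_{π ∈ Av^k(321)} P_321(π) = 1. -/
open Finset Filter
open scoped Topology Classical

noncomputable section

/-- The number of descents of `τ`: indices `i` (1-indexed, `1 ≤ i ≤ k-1`) with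
`τ_i > τ_{i+1}`. (Here `i : Fin k` is the 0-indexed position of the left entry.) -/
def numDescents {k : ℕ} (τ : Equiv.Perm (Fin k)) : ℕ :=
  (Finset.univ.filter fun i : Fin k =>
    ∃ h : (i : ℕ) + 1 < k, τ ⟨(i : ℕ) + 1, h⟩ < τ i).card

/-- `P_321(π)`: equal to `(|π|+1)/2^|π|` if `π` is the identity, `1/2^|π|` if `π⁻¹` has
exactly one descent, and `0` otherwise. -/
def P321 {k : ℕ} (π : Equiv.Perm (Fin k)) : ℝ :=
  if π = 1 then (k + 1) / 2 ^ k
  else if numDescents π⁻¹ = 1 then 1 / 2 ^ k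
  else 0

end

noncomputable section

/-- `π⁻¹` has a descent at the (1-indexed) position `ℓ`, i.e. `(π⁻¹)_ℓ > (π⁻¹)_{ℓ+1}`
(0-indexed: the entries of `π⁻¹` at positions `ℓ-1` and `ℓ`). -/
def InvDescAt {k : ℕ} (π : Equiv.Perm (Fin k)) (ℓ : ℕ) : Prop :=
  ∃ h : ℓ < k, π⁻¹ ⟨ℓ, h⟩ < π⁻¹ ⟨ℓ - 1, Nat.lt_of_le_of_lt (Nat.sub_le ℓ 1) h⟩

end

/-!
A permutation `τ` of `Fin k` whose only possible descent is at `d` is increasing on `Iic d` and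
on `Ioi d`, so it is determined by the set `τ '' Iic d`, and every `(d + 1)`-subset arises this
way: there are `C(k, d + 1)` of them, and only the identity has no descent at all. Summing
`C(k, d + 1) - 1` over `d` gives `2 ^ k - (k + 1)`. Among any three positions two lie in the same
increasing block, so such a `τ` avoids `321`, and so does `τ⁻¹` because `321` is an involution.
Hence `P_321` is supported on `Av^k(321)`, and its sum there is
`(k + 1) / 2 ^ k + (2 ^ k - (k + 1)) / 2 ^ k = 1`.
-/

section Grassmannian

variable {α : Type*} [LinearOrder α]

theorem StrictMonoOn.eqOn_of_image_eq [WellFoundedLT α] {β : Type*} [Preorder β]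
    {s : Set α} {f g : α → β} (hf : StrictMonoOn f s) (hg : StrictMonoOn g s)
    (h : f '' s = g '' s) : s.EqOn f g := by
  have hr : s.domRestrict f = s.domRestrict g :=
    hf.domRestrict.range_inj hg.domRestrict |>.mp (by simpa only [Set.range_domRestrict] using h)
  exact fun x hx => congrFun hr ⟨x, hx⟩

def IsGrassmannian (A : Set α) (τ : Equiv.Perm α) : Prop :=
  StrictMonoOn τ A ∧ StrictMonoOn τ Aᶜ

theorem IsGrassmannian.eq_of_image_eq [WellFoundedLT α] {A : Set α} {τ σ : Equiv.Perm α}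
    (hτ : IsGrassmannian A τ) (hσ : IsGrassmannian A σ) (h : τ '' A = σ '' A) : τ = σ := by
  have hc : τ '' Aᶜ = σ '' Aᶜ := by rw [Equiv.image_compl, Equiv.image_compl, h]
  ext x
  by_cases hx : x ∈ A
  · rw [hτ.1.eqOn_of_image_eq hσ.1 h hx]
  · rw [hτ.2.eqOn_of_image_eq hσ.2 hc hx]

variable [Fintype α]

theorem exists_isGrassmannian_image_eq (A S : Finset α) (h : #S = #A) :
    ∃ τ : Equiv.Perm α, IsGrassmannian A τ ∧ A.image τ = S := by
  let e : {x // x ∈ A} ≃o {x // x ∈ S} :=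
    (Fintype.orderIsoFinOfCardEq _ (Fintype.card_coe A)).symm.trans
      (Fintype.orderIsoFinOfCardEq _ ((Fintype.card_coe S).trans h))
  let f : {x // x ∉ A} ≃o {x // x ∉ S} :=
    (Fintype.orderIsoFinOfCardEq _ (Fintype.card_subtype_compl _)).symm.trans
      (Fintype.orderIsoFinOfCardEq _ ((Fintype.card_subtype_compl _).trans (by simp [h])))
  have he : ∀ x (hx : x ∈ A), Equiv.subtypeCongr e.toEquiv f.toEquiv x = e ⟨x, hx⟩ := by
    intro x hx; simp [Equiv.subtypeCongr, Equiv.sumCompl_symm_apply_of_pos hx]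
  have hf : ∀ x (hx : x ∉ A), Equiv.subtypeCongr e.toEquiv f.toEquiv x = f ⟨x, hx⟩ := by
    intro x hx; simp [Equiv.subtypeCongr, Equiv.sumCompl_symm_apply_of_neg hx]
  refine ⟨Equiv.subtypeCongr e.toEquiv f.toEquiv, ⟨?_, ?_⟩, ?_⟩
  · intro x hx y hy hxy
    rw [he x hx, he y hy]
    exact e.strictMono (Subtype.mk_lt_mk.mpr hxy)
  · intro x hx y hy hxy
    rw [hf x hx, hf y hy]
    exact f.strictMono (Subtype.mk_lt_mk.mpr hxy)
  · ext y
    simp only [Finset.mem_image]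
    refine ⟨?_, fun hy => ?_⟩
    · rintro ⟨x, hx, rfl⟩
      rw [he x hx]
      exact (e ⟨x, hx⟩).2
    · obtain ⟨⟨x, hx⟩, hxy⟩ := e.surjective ⟨y, hy⟩
      exact ⟨x, hx, by rw [he x hx, hxy]⟩

theorem card_isGrassmannian (A : Finset α) :
    #{τ : Equiv.Perm α | IsGrassmannian A τ} = (Fintype.card α).choose #A := by
  rw [← Finset.card_univ, ← Finset.card_powersetCard]
  refine Finset.card_bij (fun τ _ => A.image τ) (fun τ _ => ?_) (fun τ hτ σ hσ h => ?_)
    (fun S hS => ?_)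
  · simp [Finset.card_image_of_injective _ τ.injective]
  · simp only [Finset.mem_filter, Finset.mem_univ, true_and] at hτ hσ
    exact hτ.eq_of_image_eq hσ (by rw [← Finset.coe_image, h, Finset.coe_image])
  · obtain ⟨τ, hτ, rfl⟩ :=
      exists_isGrassmannian_image_eq A S (Finset.mem_powersetCard_univ.mp hS)
    exact ⟨τ, by simpa using hτ, rfl⟩

end Grassmannian

theorem sum_choose_succ_sub_one (k : ℕ) :
    ∑ i ∈ Finset.range k, (k.choose (i + 1) - 1) = 2 ^ k - (k + 1) := by
  have hchoose : ∑ i ∈ Finset.range k, k.choose (i + 1) + 1 = 2 ^ k := by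
    rw [← Nat.sum_range_choose, Finset.sum_range_succ', Nat.choose_zero_right]
  have hsub : ∑ i ∈ Finset.range k, (k.choose (i + 1) - 1) + k
      = ∑ i ∈ Finset.range k, k.choose (i + 1) := by
    calc ∑ i ∈ Finset.range k, (k.choose (i + 1) - 1) + k
        = ∑ i ∈ Finset.range k, (k.choose (i + 1) - 1 + 1) := by
          rw [Finset.sum_add_distrib, Finset.sum_const, Finset.card_range, smul_eq_mul, mul_one]
      _ = ∑ i ∈ Finset.range k, k.choose (i + 1) :=
          Finset.sum_congr rfl fun i hi =>
            Nat.sub_add_cancel (Nat.choose_pos (by rw [Finset.mem_range] at hi; omega))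
  omega

section Descents

variable {k : ℕ}

def descents (τ : Equiv.Perm (Fin k)) : Finset (Fin k) :=
  {i | ∃ h : (i : ℕ) + 1 < k, τ ⟨(i : ℕ) + 1, h⟩ < τ i}

theorem numDescents_eq_card_descents (τ : Equiv.Perm (Fin k)) :
    numDescents τ = #(descents τ) := rfl

theorem Fin.val_orderSucc {a : Fin k} (ha : ¬IsMax a) : ((Order.succ a : Fin k) : ℕ) = a + 1 :=
  (Nat.covBy_iff_add_one_eq.mp (Fin.covBy_iff.mp (Order.covBy_succ_of_not_isMax ha))).symm

theorem mem_descents_iff {τ : Equiv.Perm (Fin k)} {a : Fin k} (ha : ¬IsMax a) :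
    a ∈ descents τ ↔ τ (Order.succ a) < τ a := by
  have hlt : (a : ℕ) + 1 < k := Fin.val_orderSucc ha ▸ (Order.succ a).isLt
  have hsucc : Order.succ a = ⟨(a : ℕ) + 1, hlt⟩ := Fin.ext (Fin.val_orderSucc ha)
  simp [descents, hsucc, hlt]

theorem not_isMax_of_mem_descents {τ : Equiv.Perm (Fin k)} {a : Fin k} (ha : a ∈ descents τ) :
    ¬IsMax a := by
  obtain ⟨h, -⟩ := (Finset.mem_filter.mp ha).2
  exact not_isMax_of_lt (show a < ⟨(a : ℕ) + 1, h⟩ from Fin.lt_def.mpr (Nat.lt_succ_self _))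

theorem lt_apply_succ_of_notMem_descents {τ : Equiv.Perm (Fin k)} {a : Fin k} (ha : ¬IsMax a)
    (hd : a ∉ descents τ) : τ a < τ (Order.succ a) := by
  rw [mem_descents_iff ha, not_lt] at hd
  exact hd.lt_of_ne (τ.injective.ne (Order.lt_succ_of_not_isMax ha).ne)

theorem descents_subset_singleton_iff {τ : Equiv.Perm (Fin k)} {d : Fin k} :
    descents τ ⊆ {d} ↔ IsGrassmannian (Set.Iic d) τ := by
  rw [IsGrassmannian, Set.compl_Iic]
  constructor
  · intro h
    refine ⟨strictMonoOn_of_lt_succ Set.ordConnected_Iic fun a ha _ hsa => ?_,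
      strictMonoOn_of_lt_succ Set.ordConnected_Ioi fun a ha ha' _ => ?_⟩
    · refine lt_apply_succ_of_notMem_descents ha fun had => ?_
      have : a < d := (Order.lt_succ_of_not_isMax ha).trans_le hsa
      exact this.ne (Finset.mem_singleton.mp (h had))
    · exact lt_apply_succ_of_notMem_descents ha fun had =>
        (ne_of_gt (Set.mem_Ioi.mp ha')) (Finset.mem_singleton.mp (h had))
  · rintro ⟨hle, hgt⟩ a had
    have ha := not_isMax_of_mem_descents had
    have hdesc := (mem_descents_iff ha).mp had
    have hsucc := Order.lt_succ_of_not_isMax ha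
    rcases lt_trichotomy a d with had' | rfl | hda
    · exact absurd (hle had'.le (Order.succ_le_of_lt had') hsucc) hdesc.not_gt
    · exact Finset.mem_singleton_self a
    · exact absurd (hgt hda (hda.trans hsucc) hsucc) hdesc.not_gt

theorem descents_eq_empty_iff {τ : Equiv.Perm (Fin k)} : descents τ = ∅ ↔ τ = 1 := by
  constructor
  · intro h
    have hmono : StrictMono τ := strictMono_of_lt_succ fun a ha =>
      lt_apply_succ_of_notMem_descents ha (by simp [h])
    exact Equiv.ext (congrFun ((hmono.range_inj strictMono_id).mp (by simp)))
  · rintro rfl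
    simp [descents, Fin.lt_def]

theorem card_descents_eq_singleton (d : Fin k) :
    #{τ : Equiv.Perm (Fin k) | descents τ = {d}} = k.choose (d + 1) - 1 := by
  have hsub : #{τ : Equiv.Perm (Fin k) | descents τ ⊆ {d}} = k.choose (d + 1) := by
    simp_rw [descents_subset_singleton_iff, ← Finset.coe_Iic, card_isGrassmannian,
      Fintype.card_fin, Fin.card_Iic]
  have hsplit : #{τ : Equiv.Perm (Fin k) | descents τ ⊆ {d}}
      = 1 + #{τ : Equiv.Perm (Fin k) | descents τ = {d}} := by
    simp_rw [Finset.subset_singleton_iff, Finset.filter_or, descents_eq_empty_iff]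
    rw [Finset.card_union_of_disjoint, Finset.filter_eq', if_pos (Finset.mem_univ _),
      Finset.card_singleton]
    exact Finset.disjoint_filter.mpr fun τ _ h1 hd =>
      Finset.singleton_ne_empty d (hd.symm.trans (descents_eq_empty_iff.mpr h1))
  omega

theorem card_numDescents_eq_one :
    #{τ : Equiv.Perm (Fin k) | numDescents τ = 1} = 2 ^ k - (k + 1) := by
  have hunion : ({τ | numDescents τ = 1} : Finset (Equiv.Perm (Fin k)))
      = Finset.univ.biUnion fun d => {τ | descents τ = {d}} := by
    ext τ
    simp [numDescents_eq_card_descents, Finset.card_eq_one]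
  rw [hunion, Finset.card_biUnion fun d _ d' _ hdd' => Finset.disjoint_filter.mpr
    fun τ _ hd hd' => hdd' (Finset.singleton_injective (hd.symm.trans hd'))]
  simp_rw [card_descents_eq_singleton]
  rw [Fin.sum_univ_eq_sum_range (fun i => k.choose (i + 1) - 1), sum_choose_succ_sub_one]

end Descents

theorem contains_perm321_iff {n : ℕ} (σ : Equiv.Perm (Fin n)) :
    Contains perm321 σ ↔ ∃ p q r : Fin n, p < q ∧ q < r ∧ σ r < σ q ∧ σ q < σ p := by
  have h321 : StrictAnti perm321 := by decide
  constructor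
  · rintro ⟨f, hf, hσf⟩
    exact ⟨f 0, f 1, f 2, hf (by decide), hf (by decide), (hσf 2 1).mpr (by decide),
      (hσf 1 0).mpr (by decide)⟩
  · rintro ⟨p, q, r, hpq, hqr, hrq, hqp⟩
    have hf : StrictMono ![p, q, r] :=
      Fin.strictMono_iff_lt_succ.mpr (by simp [Fin.forall_fin_two, hpq, hqr])
    have hσf : StrictAnti (σ ∘ ![p, q, r]) :=
      Fin.strictAnti_iff_succ_lt.mpr (by simp [Fin.forall_fin_two, hrq, hqp])
    exact ⟨_, hf, fun a b => hσf.lt_iff_gt.trans h321.lt_iff_gt.symm⟩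

theorem Contains.perm321_inv {n : ℕ} {σ : Equiv.Perm (Fin n)} (h : Contains perm321 σ) :
    Contains perm321 σ⁻¹ := by
  obtain ⟨p, q, r, hpq, hqr, hrq, hqp⟩ := (contains_perm321_iff σ).mp h
  exact (contains_perm321_iff σ⁻¹).mpr
    ⟨σ r, σ q, σ p, hrq, hqp, by simpa using hpq, by simpa using hqr⟩

theorem IsGrassmannian.avoids_perm321 {n : ℕ} {d : Fin n} {τ : Equiv.Perm (Fin n)}
    (h : IsGrassmannian (Set.Iic d) τ) : Avoids perm321 τ := by
  intro hc
  obtain ⟨p, q, r, hpq, hqr, hrq, hqp⟩ := (contains_perm321_iff τ).mp hc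
  rcases le_or_gt q d with hqd | hdq
  · exact (h.1 (hpq.le.trans hqd) hqd hpq).not_gt hqp
  · exact (h.2 (Set.notMem_Iic.mpr hdq) (Set.notMem_Iic.mpr (hdq.trans hqr)) hqr).not_gt hrq

theorem avoids_perm321_of_numDescents_inv_eq_one {k : ℕ} {π : Equiv.Perm (Fin k)}
    (h : numDescents π⁻¹ = 1) : Avoids perm321 π := by
  obtain ⟨d, hd⟩ := Finset.card_eq_one.mp h
  exact fun hc => (descents_subset_singleton_iff.mp hd.subset).avoids_perm321 hc.perm321_inv

theorem card_filter_inv {α : Type*} [Fintype α] [DecidableEq α] (p : Equiv.Perm α → Prop)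
    [DecidablePred p] : #{π : Equiv.Perm α | p π⁻¹} = #{τ : Equiv.Perm α | p τ} :=
  Finset.card_equiv (Equiv.inv _) (by simp)

theorem numDescents_inv_eq_one_and_invDescAt_iff {k ℓ : ℕ} (hℓ : 1 ≤ ℓ) (hℓk : ℓ < k)
    (π : Equiv.Perm (Fin k)) :
    numDescents π⁻¹ = 1 ∧ InvDescAt π ℓ ↔ descents π⁻¹ = {⟨ℓ - 1, by omega⟩} := by
  have hmem : InvDescAt π ℓ ↔ ⟨ℓ - 1, by omega⟩ ∈ descents π⁻¹ := by
    obtain ⟨m, rfl⟩ : ∃ m, ℓ = m + 1 := ⟨ℓ - 1, by omega⟩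
    simp [InvDescAt, descents]
  rw [hmem, numDescents_eq_card_descents]
  constructor
  · rintro ⟨hcard, hd⟩
    obtain ⟨a, ha⟩ := Finset.card_eq_one.mp hcard
    rw [ha] at hd ⊢
    rw [Finset.mem_singleton.mp hd]
  · intro h
    simp [h]

theorem P321_eq {k : ℕ} (π : Equiv.Perm (Fin k)) :
    P321 π = (if π = 1 then ((k : ℝ) + 1) / 2 ^ k else 0)
      + (if numDescents π⁻¹ = 1 then (1 : ℝ) / 2 ^ k else 0) := by
  by_cases hπ : π = 1
  · have : numDescents (1 : Equiv.Perm (Fin k)) = 0 := by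
      rw [numDescents_eq_card_descents, descents_eq_empty_iff.mpr rfl, Finset.card_empty]
    simp [P321, hπ, this]
  · simp [P321, hπ]

theorem sum_P321_avSet_perm321 (k : ℕ) : ∑ π ∈ AvSet perm321 k, P321 π = 1 := by
  have havoid_one : Avoids perm321 (1 : Equiv.Perm (Fin k)) := fun hc => by
    obtain ⟨p, q, r, -, hqr, hrq, -⟩ := (contains_perm321_iff _).mp hc
    exact hqr.not_gt hrq
  have hsupp : ∀ π ∈ Finset.univ, π ∉ AvSet perm321 k → P321 π = 0 := by
    intro π _ hπ
    rw [AvSet, Finset.mem_filter] at hπ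
    have hne : π ≠ 1 := fun h => hπ ⟨Finset.mem_univ _, h ▸ havoid_one⟩
    have hdesc : numDescents π⁻¹ ≠ 1 := fun h =>
      hπ ⟨Finset.mem_univ _, avoids_perm321_of_numDescents_inv_eq_one h⟩
    simp [P321, hne, hdesc]
  have hcard := card_filter_inv (fun τ : Equiv.Perm (Fin k) => numDescents τ = 1)
  rw [Finset.sum_subset (Finset.subset_univ _) hsupp]
  simp_rw [P321_eq]
  rw [Finset.sum_add_distrib, Finset.sum_ite_eq', if_pos (Finset.mem_univ _),
    ← Finset.sum_filter, Finset.sum_const, hcard, card_numDescents_eq_one, nsmul_eq_mul,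
    Nat.cast_sub (Nat.lt_two_pow_self : k + 1 ≤ 2 ^ k)]
  field_simp
  push_cast
  ring

theorem card_one_inverse_descent_general {k : ℕ} :
    (∀ ℓ : ℕ, 1 ≤ ℓ → ℓ ≤ k - 1 →
      ((Finset.univ.filter (fun π : Equiv.Perm (Fin k) =>
          numDescents π⁻¹ = 1 ∧ InvDescAt π ℓ)).card = k.choose ℓ - 1
        ∧ ∀ π : Equiv.Perm (Fin k),
            numDescents π⁻¹ = 1 → InvDescAt π ℓ → Avoids perm321 π))
    ∧ (Finset.univ.filter (fun π : Equiv.Perm (Fin k) => numDescents π⁻¹ = 1)).card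
        = 2 ^ k - (k + 1)
    ∧ (∑ π ∈ AvSet perm321 k, P321 π) = 1 := by
  refine ⟨fun ℓ hℓ hℓk => ⟨?_, fun π hπ _ => avoids_perm321_of_numDescents_inv_eq_one hπ⟩,
    ?_, sum_P321_avSet_perm321 k⟩
  · rw [Finset.filter_congr fun π _ =>
      numDescents_inv_eq_one_and_invDescAt_iff hℓ (by omega : ℓ < k) π,
      card_filter_inv (fun τ => descents τ = _), card_descents_eq_singleton,
      Nat.sub_add_cancel hℓ]
  · rw [card_filter_inv (fun τ => numDescents τ = 1)]
    exact card_numDescents_eq_one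

/-- **Counting permutations whose inverse has exactly one descent.**
(i) For `1 ≤ ℓ ≤ k-1`, the number of permutations `π` of size `k` whose inverse has exactly
one descent, located at position `ℓ`, equals `C(k,ℓ) − 1`, and every such `π` avoids `321`.
(ii) Consequently the number of `π` of size `k` whose inverse has exactly one descent is
`2^k − (k+1)`, and `Σ_{π ∈ Av^k(321)} P_321(π) = 1`. -/
theorem card_one_inverse_descent {k : ℕ} (hk : 1 ≤ k) :
    (∀ ℓ : ℕ, 1 ≤ ℓ → ℓ ≤ k - 1 →
      ((Finset.univ.filter (fun π : Equiv.Perm (Fin k) =>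
          numDescents π⁻¹ = 1 ∧ InvDescAt π ℓ)).card = k.choose ℓ - 1
        ∧ ∀ π : Equiv.Perm (Fin k),
            numDescents π⁻¹ = 1 → InvDescAt π ℓ → Avoids perm321 π))
    ∧ (Finset.univ.filter (fun π : Equiv.Perm (Fin k) => numDescents π⁻¹ = 1)).card
        = 2 ^ k - (k + 1)
    ∧ (∑ π ∈ AvSet perm321 k, P321 π) = 1 :=
  card_one_inverse_descent_general
end

section
/- Fix δ ∈ (0,1) and set p = (1−δ)/2. For every pattern π ∈ Av(231), the series Σ_{σ ∈ Av(231)} p^{|σ|−1}(1−p)^{|σ|+1} · c-occ(π,σ) (over 231-avoiding permutations of all sizes n ≥ 1) converges, and δ · Σ_{σ ∈ Av(231)} p^{|σ|−1}(1−p)^{|σ|+1} · c-occ(π,σ) = Σ_{σ ∈ Av(231)} p^{|σ|−1}(1−p)^{|σ|+1} · 𝟙{σ realizes π at its maximum}. -/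
open Finset Filter
open scoped Topology Classical

noncomputable section

/-- `σ` realizes `π` at its maximum: writing `m = indmax(π)` and `ℓ = indmax(σ)`
(0-indexed positions of the maximum values), the interval `J = [ℓ−m+1, ℓ+k−m]` (1-indexed)
is contained in `[1,|σ|]` and `pat_J(σ) = π`. -/
def RealizesAtMax {k n : ℕ} (π : Equiv.Perm (Fin k)) (σ : Equiv.Perm (Fin n)) : Prop :=
  ∃ (hk : 0 < k) (hn : 0 < n),
    ((π⁻¹ ⟨k - 1, by omega⟩ : Fin k) : ℕ) ≤ ((σ⁻¹ ⟨n - 1, by omega⟩ : Fin n) : ℕ) ∧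
    IsOccAt π σ
      (((σ⁻¹ ⟨n - 1, by omega⟩ : Fin n) : ℕ) - ((π⁻¹ ⟨k - 1, by omega⟩ : Fin k) : ℕ))

end

/-!
A `231`-avoiding permutation of size `n + 1` with its maximum at position `ℓ` is `α (n) (β + ℓ)`
for unique `231`-avoiding `α`, `β`: an entry left of the maximum above an entry right of it would
form a `231`. A consecutive occurrence of `π` lies inside `α`, inside `β`, or passes through the
maximum, and then the maxima of `π` and `σ` must be aligned, i.e. `σ` realizes `π` at its maximum.
Hence the numbers of `231`-avoiders and of occurrences obey Catalan-type convolution recurrences.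
With weights `p ^ n (1 - p) ^ (n + 1)` the total weight `D` of `Av(231)` solves
`D = (1 - p) + p D²`, so `D = 1` as `p < 1/2`, and the weighted occurrence count `C` solves
`C = 2 p C D + B`, where `B` is the weight of the permutations realizing `π` at their maximum;
thus `δ C = (1 - 2p) C = B`. The same recurrences, applied to partial sums, bound them and give
convergence.
-/

open Equiv

section Pv

variable {n : ℕ}

lemma pv_of_lt (σ : Perm (Fin n)) {j : ℕ} (hj : j < n) : pv σ j = σ ⟨j, hj⟩ :=
  dif_pos hj

lemma pv_lt (σ : Perm (Fin n)) {j : ℕ} (hj : j < n) : pv σ j < n := by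
  rw [pv_of_lt σ hj]; exact (σ _).isLt

lemma pv_le_pred (σ : Perm (Fin n)) (j : ℕ) : pv σ j ≤ n - 1 := by
  by_cases hj : j < n
  · have := pv_lt σ hj; omega
  · simp [pv, hj]

lemma pv_injOn (σ : Perm (Fin n)) {i j : ℕ} (hi : i < n) (hj : j < n)
    (h : pv σ i = pv σ j) : i = j := by
  rw [pv_of_lt σ hi, pv_of_lt σ hj] at h
  simpa using σ.injective (Fin.ext h)

lemma Equiv.Perm.ext_pv {σ τ : Perm (Fin n)} (h : ∀ j < n, pv σ j = pv τ j) : σ = τ :=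
  Perm.ext fun j => Fin.ext <| by simpa [pv_of_lt _ j.isLt] using h j j.isLt

noncomputable def permOfPv (n : ℕ) (f : ℕ → ℕ) (hf : ∀ j < n, f j < n)
    (hinj : ∀ i < n, ∀ j < n, f i = f j → i = j) : Perm (Fin n) :=
  Equiv.ofBijective (fun j => ⟨f j, hf j j.isLt⟩) <| Finite.injective_iff_bijective.mp
    fun i j h => Fin.ext <| hinj i i.isLt j j.isLt (congrArg Fin.val h)

lemma pv_permOfPv {f : ℕ → ℕ} {hf : ∀ j < n, f j < n}
    {hinj : ∀ i < n, ∀ j < n, f i = f j → i = j} {j : ℕ} (hj : j < n) :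
    pv (permOfPv n f hf hinj) j = f j :=
  pv_of_lt _ hj

lemma contains_perm231_iff (σ : Perm (Fin n)) :
    Contains perm231 σ ↔
      ∃ i j l, i < j ∧ j < l ∧ l < n ∧ pv σ l < pv σ i ∧ pv σ i < pv σ j := by
  constructor
  · rintro ⟨f, hf, hpat⟩
    refine ⟨f 0, f 1, f 2, hf (by decide), hf (by decide), (f 2).isLt, ?_, ?_⟩
    · simpa [pv_of_lt] using (hpat 2 0).2 (by decide)
    · simpa [pv_of_lt] using (hpat 0 1).2 (by decide)
  · rintro ⟨i, j, l, hij, hjl, hl, hli, hij'⟩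
    have hj := hjl.trans hl
    have hi := hij.trans hj
    simp only [pv_of_lt σ hi, pv_of_lt σ hj, pv_of_lt σ hl] at hli hij'
    refine ⟨![⟨i, hi⟩, ⟨j, hj⟩, ⟨l, hl⟩], ?_, ?_⟩
    · intro a b hab
      fin_cases a <;> fin_cases b <;> simp_all; omega
    · intro a b
      fin_cases a <;> fin_cases b <;> simp [perm231] <;> omega

end Pv

section Glue

variable {n : ℕ}

/-- The permutation `α (n) (β + ℓ)` of size `n + 1`, whose maximum sits at position `ℓ`. -/
noncomputable def glue (ℓ : Fin (n + 1)) (α : Perm (Fin ℓ)) (β : Perm (Fin (n - ℓ))) :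
    Perm (Fin (n + 1)) :=
  permOfPv (n + 1)
    (fun j => if j < ℓ then pv α j else if j = ℓ then n else ℓ + pv β (j - ℓ - 1))
    (fun j hj => by
      have := pv_le_pred α j
      have := pv_le_pred β (j - ℓ - 1)
      split_ifs <;> omega)
    (fun i hi j hj h => by
      have := pv_le_pred α i; have := pv_le_pred α j
      have := pv_le_pred β (i - ℓ - 1); have := pv_le_pred β (j - ℓ - 1)
      split_ifs at h
      · exact pv_injOn α ‹_› ‹_› h
      all_goals try omega
      have := pv_injOn β (i := i - ℓ - 1) (j := j - ℓ - 1) (by omega) (by omega) (by omega)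
      omega)

variable {ℓ : Fin (n + 1)} {α : Perm (Fin ℓ)} {β : Perm (Fin (n - ℓ))}

lemma pv_glue_of_lt {j : ℕ} (hj : j < ℓ) : pv (glue ℓ α β) j = pv α j := by
  rw [glue, pv_permOfPv (by omega), if_pos hj]

lemma pv_glue_self : pv (glue ℓ α β) ℓ = n := by
  rw [glue, pv_permOfPv ℓ.isLt, if_neg (lt_irrefl _), if_pos rfl]

lemma pv_glue_add {j : ℕ} (hj : j < n - ℓ) :
    pv (glue ℓ α β) (ℓ + 1 + j) = ℓ + pv β j := by
  rw [glue, pv_permOfPv (by omega), if_neg (by omega), if_neg (by omega)]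
  congr 2; omega

lemma pv_glue_of_gt {j : ℕ} (hj : ℓ < j) (hjn : j ≤ n) :
    pv (glue ℓ α β) j = ℓ + pv β (j - ℓ - 1) := by
  rw [← pv_glue_add (by omega)]; congr 1; omega

lemma glue_inv_last : (glue ℓ α β)⁻¹ (Fin.last n) = ℓ := by
  rw [Perm.inv_eq_iff_eq, eq_comm, Fin.ext_iff, ← pv_of_lt _ ℓ.isLt, pv_glue_self, Fin.val_last]

lemma contains_glue_iff :
    Contains perm231 (glue ℓ α β) ↔ Contains perm231 α ∨ Contains perm231 β := by
  simp only [contains_perm231_iff]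
  constructor
  · rintro ⟨i, j, l, hij, hjl, hl, hli, hij'⟩
    rcases lt_trichotomy l ℓ with hlℓ | rfl | hlℓ
    · rw [pv_glue_of_lt hlℓ, pv_glue_of_lt (by omega)] at hli
      rw [pv_glue_of_lt (by omega), pv_glue_of_lt (by omega)] at hij'
      exact .inl ⟨i, j, l, hij, hjl, hlℓ, hli, hij'⟩
    · have := pv_le_pred (glue ℓ α β) i
      rw [pv_glue_self] at hli
      omega
    · have hiℓ : (ℓ : ℕ) < i := by
        rcases lt_trichotomy i ℓ with hiℓ | rfl | hiℓ
        · rw [pv_glue_of_lt hiℓ, pv_glue_of_gt hlℓ (by omega)] at hli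
          have := pv_le_pred α i
          omega
        · have := pv_le_pred (glue ℓ α β) j
          rw [pv_glue_self] at hij'
          omega
        · exact hiℓ
      rw [pv_glue_of_gt hlℓ (by omega), pv_glue_of_gt hiℓ (by omega)] at hli
      rw [pv_glue_of_gt hiℓ (by omega), pv_glue_of_gt (by omega) (by omega)] at hij'
      exact .inr ⟨i - ℓ - 1, j - ℓ - 1, l - ℓ - 1, by omega, by omega, by omega,
        by omega, by omega⟩
  · rintro (⟨i, j, l, hij, hjl, hl, hli, hij'⟩ | ⟨i, j, l, hij, hjl, hl, hli, hij'⟩)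
    · refine ⟨i, j, l, hij, hjl, by omega, ?_, ?_⟩ <;>
        simpa only [pv_glue_of_lt hl, pv_glue_of_lt (hij.trans (hjl.trans hl)),
          pv_glue_of_lt (hjl.trans hl)]
    · refine ⟨ℓ + 1 + i, ℓ + 1 + j, ℓ + 1 + l, by omega, by omega, by omega, ?_, ?_⟩ <;>
        simp only [pv_glue_add hl, pv_glue_add (hij.trans (hjl.trans hl)),
          pv_glue_add (hjl.trans hl)] <;> omega

lemma avoids_glue_iff :
    Avoids perm231 (glue ℓ α β) ↔ Avoids perm231 α ∧ Avoids perm231 β := by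
  rw [Avoids, contains_glue_iff, not_or, Avoids, Avoids]

lemma glue_injective {α' : Perm (Fin ℓ)} {β' : Perm (Fin (n - ℓ))}
    (h : glue ℓ α β = glue ℓ α' β') : α = α' ∧ β = β' := by
  refine ⟨Perm.ext_pv fun j hj => ?_, Perm.ext_pv fun j hj => ?_⟩
  · rw [← pv_glue_of_lt hj, h, pv_glue_of_lt hj]
  · have := congrArg (pv · (ℓ + 1 + j)) h
    simp only [pv_glue_add hj] at this
    omega

end Glue

section Decomposition

variable {n : ℕ}

lemma lt_iff_pv_lt_of_separated (σ : Perm (Fin n)) (ℓ : ℕ)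
    (hsep : ∀ i j, i < ℓ → ℓ ≤ j → j < n → pv σ i < pv σ j) {i : ℕ} (hi : i < n) :
    i < ℓ ↔ pv σ i < ℓ := by
  let below (x : Fin n) : Finset (Fin n) := {y | σ y < σ x}
  have hbelow (x : Fin n) : #(below x) = σ x := by
    rw [card_equiv σ (t := {y | y < σ x}) (fun y => by simp only [below, mem_filter, mem_univ]),
      filter_gt_eq_Iio, Fin.card_Iio]
  have hsep' (x y : Fin n) (hx : (x : ℕ) < ℓ) (hy : ℓ ≤ (y : ℕ)) : σ x < σ y := by
    have := hsep x y hx hy y.isLt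
    rwa [pv_of_lt σ x.isLt, pv_of_lt σ y.isLt, ← Fin.lt_def] at this
  have hprefix : #({y | (y : ℕ) < ℓ} : Finset (Fin n)) = min n ℓ := Fin.card_filter_val_lt
  rw [pv_of_lt σ hi, ← hbelow]
  constructor
  · intro hiℓ
    have hsub : below ⟨i, hi⟩ ⊂ ({y | (y : ℕ) < ℓ} : Finset (Fin n)) := by
      refine Finset.ssubset_iff_subset_ne.2 ⟨fun y hy => ?_, fun h => ?_⟩
      · simp only [below, mem_filter, mem_univ, true_and] at hy ⊢
        by_contra! hyℓ
        exact lt_asymm hy (hsep' _ _ hiℓ hyℓ)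
      · have : (⟨i, hi⟩ : Fin n) ∈ below ⟨i, hi⟩ := h ▸ by simpa using hiℓ
        simp [below] at this
    have := card_lt_card hsub
    omega
  · intro hlt
    by_contra! hℓi
    have hsub : ({y | (y : ℕ) < ℓ} : Finset (Fin n)) ⊆ below ⟨i, hi⟩ := fun y hy => by
      simp only [below, mem_filter, mem_univ, true_and] at hy ⊢
      exact hsep' _ _ hy hℓi
    have := card_le_card hsub
    omega

lemma pv_lt_iff_of_avoids {σ : Perm (Fin (n + 1))} (hσ : Avoids perm231 σ) {ℓ : ℕ}
    (hℓ : pv σ ℓ = n) (hℓn : ℓ ≤ n) {j : ℕ} (hj : j ≤ n) :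
    j < ℓ ↔ pv σ j < ℓ := by
  refine lt_iff_pv_lt_of_separated σ ℓ (fun i j hi hj hjn => ?_) (by omega)
  have hmax : pv σ i < pv σ ℓ := by
    have := pv_le_pred σ i
    have : pv σ i ≠ pv σ ℓ := fun h => by have := pv_injOn σ (by omega) (by omega) h; omega
    omega
  rcases hj.eq_or_lt with rfl | hj
  · exact hmax
  · have hne : pv σ i ≠ pv σ j := fun h => by have := pv_injOn σ (by omega) hjn h; omega
    by_contra! hji
    exact hσ ((contains_perm231_iff σ).2 ⟨i, ℓ, j, hi, hj, hjn, by omega, hmax⟩)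

lemma exists_glue_eq {σ : Perm (Fin (n + 1))} (hσ : Avoids perm231 σ) {ℓ : Fin (n + 1)}
    (hℓ : pv σ ℓ = n) : ∃ α β, glue ℓ α β = σ := by
  have hleft {j : ℕ} (hj : j ≤ n) := pv_lt_iff_of_avoids hσ hℓ ℓ.is_le hj
  have hne {j : ℕ} (hj : j ≤ n) (hjℓ : j ≠ ℓ) : pv σ j ≠ n := fun h =>
    hjℓ (pv_injOn σ (by omega) ℓ.isLt (h.trans hℓ.symm))
  let α := permOfPv ℓ (pv σ) (fun j hj => (hleft (by omega)).1 hj)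
    (fun i hi j hj => pv_injOn σ (by omega) (by omega))
  let β := permOfPv (n - ℓ) (fun j => pv σ (ℓ + 1 + j) - ℓ)
    (fun j hj => by
      have := (hleft (j := ℓ + 1 + j) (by omega)).not.1 (by omega)
      have := hne (j := ℓ + 1 + j) (by omega) (by omega)
      have := pv_le_pred σ (ℓ + 1 + j)
      omega)
    (fun i hi j hj h => by
      have := (hleft (j := ℓ + 1 + i) (by omega)).not.1 (by omega)
      have := (hleft (j := ℓ + 1 + j) (by omega)).not.1 (by omega)
      have := pv_injOn σ (i := ℓ + 1 + i) (j := ℓ + 1 + j) (by omega) (by omega) (by omega)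
      omega)
  refine ⟨α, β, Perm.ext_pv fun j hj => ?_⟩
  rcases lt_trichotomy j ℓ with hjℓ | rfl | hjℓ
  · rw [pv_glue_of_lt hjℓ, pv_permOfPv hjℓ]
  · rw [pv_glue_self, hℓ]
  · have := (hleft (j := j) (by omega)).not.1 (by omega)
    rw [pv_glue_of_gt hjℓ (by omega), pv_permOfPv (by omega)]
    rw [show (ℓ : ℕ) + 1 + (j - ℓ - 1) = j by omega]
    omega

lemma inv_last_eq_iff (σ : Perm (Fin (n + 1))) (ℓ : Fin (n + 1)) :
    σ⁻¹ (Fin.last n) = ℓ ↔ pv σ ℓ = n := by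
  rw [Perm.inv_eq_iff_eq, eq_comm, Fin.ext_iff, pv_of_lt σ ℓ.isLt, Fin.val_last]

lemma sum_avSet_succ {M : Type*} [AddCommMonoid M] (F : Perm (Fin (n + 1)) → M) :
    ∑ σ ∈ AvSet perm231 (n + 1), F σ =
      ∑ ℓ : Fin (n + 1), ∑ x ∈ AvSet perm231 ℓ ×ˢ AvSet perm231 (n - ℓ),
        F (glue ℓ x.1 x.2) := by
  rw [← sum_fiberwise _ (fun σ => σ⁻¹ (Fin.last n))]
  refine sum_congr rfl fun ℓ _ => (sum_bij (fun x _ => glue ℓ x.1 x.2) ?_ ?_ ?_ ?_).symm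
  · rintro ⟨α, β⟩ hx
    simp only [AvSet, mem_product, mem_filter, mem_univ, true_and] at hx
    simp only [AvSet, mem_filter, mem_univ, true_and]
    exact ⟨avoids_glue_iff.2 hx, glue_inv_last⟩
  · rintro ⟨α, β⟩ - ⟨α', β'⟩ - h
    obtain ⟨rfl, rfl⟩ := glue_injective h
    rfl
  · intro σ hσ
    simp only [AvSet, mem_filter, mem_univ, true_and, inv_last_eq_iff] at hσ
    obtain ⟨α, β, rfl⟩ := exists_glue_eq hσ.1 hσ.2
    exact ⟨(α, β), by simpa [AvSet, avoids_glue_iff] using hσ.1, rfl⟩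
  · intros; rfl

end Decomposition

section Occurrences

variable {k n : ℕ}

lemma windowMatch_iff_of_pv_eq_add {n' : ℕ} {π : Perm (Fin k)} {σ : Perm (Fin n)}
    {τ : Perm (Fin n')} {i j c : ℕ} (h : ∀ a < k, pv σ (i + a) = c + pv τ (j + a)) :
    WindowMatch π σ i ↔ WindowMatch π τ j := by
  refine forall₂_congr fun a b => ?_
  rw [h a a.isLt, h b b.isLt, Nat.add_lt_add_iff_left]

lemma cOcc_eq_sum (π : Perm (Fin k)) (σ : Perm (Fin n)) :
    cOcc π σ = ∑ i ∈ range n, if IsOccAt π σ i then 1 else 0 := by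
  rw [cOcc, cOccWin, card_filter]
  exact sum_congr rfl fun i _ => if_congr (by simp [IsOccAt]) rfl rfl

lemma realizesAtMax_iff {π : Perm (Fin (k + 1))} {σ : Perm (Fin (n + 1))} :
    RealizesAtMax π σ ↔ (π⁻¹ (Fin.last k) : ℕ) ≤ σ⁻¹ (Fin.last n) ∧
      IsOccAt π σ (σ⁻¹ (Fin.last n) - π⁻¹ (Fin.last k)) :=
  ⟨fun ⟨_, _, h⟩ => h, fun h => ⟨k.succ_pos, n.succ_pos, h⟩⟩

lemma isOccAt_iff_of_le_of_lt {π : Perm (Fin (k + 1))} {σ : Perm (Fin (n + 1))}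
    {ℓ : Fin (n + 1)} (hℓ : σ⁻¹ (Fin.last n) = ℓ) {i : ℕ} (hiℓ : i ≤ ℓ)
    (hℓi : ℓ < i + (k + 1)) :
    IsOccAt π σ i ↔ i + π⁻¹ (Fin.last k) = ℓ ∧ RealizesAtMax π σ := by
  rw [realizesAtMax_iff, hℓ]
  constructor
  · intro hocc
    set m := π⁻¹ (Fin.last k)
    have hπm : π m = Fin.last k := π.apply_symm_apply _
    let a₀ : Fin (k + 1) := ⟨ℓ - i, by omega⟩
    have hπa₀ : π a₀ = Fin.last k := by
      by_contra hne
      have hlt : π a₀ < π m := hπm ▸ lt_of_le_of_ne (Fin.le_last _) hne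
      have hwin := (hocc.2 a₀ m).2 hlt
      have hia₀ : i + (a₀ : ℕ) = ℓ := by simp only [a₀]; omega
      rw [hia₀, (inv_last_eq_iff σ ℓ).1 hℓ] at hwin
      have := pv_le_pred σ (i + m)
      omega
    have : (ℓ : ℕ) - i = m := congrArg Fin.val (π.injective (hπa₀.trans hπm.symm))
    refine ⟨by omega, by omega, ?_⟩
    rwa [show (ℓ : ℕ) - m = i by omega]
  · rintro ⟨hi, -, hocc⟩
    rwa [← hi, Nat.add_sub_cancel] at hocc

variable {π : Perm (Fin (k + 1))} {ℓ : Fin (n + 1)} {α : Perm (Fin ℓ)}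
  {β : Perm (Fin (n - ℓ))}

lemma isOccAt_glue_of_add_le {i : ℕ} (h : i + (k + 1) ≤ ℓ) :
    IsOccAt π (glue ℓ α β) i ↔ IsOccAt π α i :=
  and_congr (iff_of_true (by omega) h) <| windowMatch_iff_of_pv_eq_add (c := 0) fun a ha => by
    rw [zero_add, pv_glue_of_lt (by omega)]

lemma isOccAt_glue_add {j : ℕ} :
    IsOccAt π (glue ℓ α β) (ℓ + 1 + j) ↔ IsOccAt π β j := by
  rw [IsOccAt, IsOccAt, show ℓ + 1 + j + (k + 1) ≤ n + 1 ↔ j + (k + 1) ≤ n - ℓ by omega]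
  exact and_congr_right fun h => windowMatch_iff_of_pv_eq_add fun a ha => by
    rw [add_assoc, pv_glue_add (by omega)]

lemma ite_isOccAt_glue_of_le {i : ℕ} (hi : i ≤ ℓ) :
    (if IsOccAt π (glue ℓ α β) i then 1 else 0) = (if IsOccAt π α i then 1 else 0) +
      if i = ℓ - π⁻¹ (Fin.last k) then (if RealizesAtMax π (glue ℓ α β) then 1 else 0)
      else 0 := by
  have hm := (π⁻¹ (Fin.last k)).is_le
  by_cases hleft : i + (k + 1) ≤ ℓ
  · rw [isOccAt_glue_of_add_le hleft, if_neg (show i ≠ ℓ - π⁻¹ (Fin.last k) by omega),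
      add_zero]
  · have hα : ¬ IsOccAt π α i := fun h => hleft h.1
    rw [isOccAt_iff_of_le_of_lt glue_inv_last hi (by omega), if_neg hα, zero_add]
    by_cases hR : RealizesAtMax π (glue ℓ α β)
    · have := (realizesAtMax_iff.1 hR).1
      rw [glue_inv_last] at this
      simp only [hR, and_true]
      exact if_congr (by omega) rfl rfl
    · simp [hR]

lemma cOcc_glue : cOcc π (glue ℓ α β) =
    cOcc π α + cOcc π β + if RealizesAtMax π (glue ℓ α β) then 1 else 0 := by
  have hm := (π⁻¹ (Fin.last k)).is_le
  have hsplit : range (n + 1) = range ((ℓ + 1) + (n - ℓ)) := by congr 1; omega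
  rw [cOcc_eq_sum, hsplit, sum_range_add, cOcc_eq_sum π α, cOcc_eq_sum π β,
    sum_congr rfl fun i hi => ite_isOccAt_glue_of_le (Nat.lt_succ_iff.1 (mem_range.1 hi)),
    sum_add_distrib, sum_range_succ, if_neg (fun h : IsOccAt π α ℓ => by have := h.1; omega),
    sum_ite_eq', if_pos (mem_range.2 (by omega))]
  simp only [isOccAt_glue_add, add_zero]
  ring

end Occurrences

section Counting

variable {k : ℕ}

noncomputable def avCount (n : ℕ) : ℕ := #(AvSet perm231 n)

noncomputable def occTotal (π : Perm (Fin k)) (n : ℕ) : ℕ :=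
  ∑ σ ∈ AvSet perm231 n, cOcc π σ

noncomputable def maxRealizations (π : Perm (Fin k)) (n : ℕ) : ℕ :=
  #{σ ∈ AvSet perm231 n | RealizesAtMax π σ}

lemma avCount_zero : avCount 0 = 1 := by
  rw [avCount, AvSet, filter_true_of_mem fun σ _ ⟨f, _⟩ => (f 0).elim0]
  rfl

lemma avCount_succ (n : ℕ) :
    avCount (n + 1) = ∑ i ∈ range (n + 1), avCount i * avCount (n - i) := by
  rw [avCount, card_eq_sum_ones, sum_avSet_succ,
    Fin.sum_univ_eq_sum_range (fun i => ∑ x ∈ AvSet perm231 i ×ˢ AvSet perm231 (n - i), 1)]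
  simp only [← card_eq_sum_ones, card_product, avCount]

lemma occTotal_zero (π : Perm (Fin k)) : occTotal π 0 = 0 :=
  sum_eq_zero fun σ _ => by simp [cOcc, cOccWin]

lemma maxRealizations_zero (π : Perm (Fin k)) : maxRealizations π 0 = 0 := by
  simp [maxRealizations, RealizesAtMax]

lemma maxRealizations_le (π : Perm (Fin k)) (n : ℕ) : maxRealizations π n ≤ avCount n :=
  card_filter_le _ _

lemma occTotal_succ (π : Perm (Fin (k + 1))) (n : ℕ) :
    occTotal π (n + 1) = ∑ i ∈ range (n + 1),
      (occTotal π i * avCount (n - i) + avCount i * occTotal π (n - i)) +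
        maxRealizations π (n + 1) := by
  have hR : maxRealizations π (n + 1) = ∑ ℓ : Fin (n + 1),
      ∑ x ∈ AvSet perm231 ℓ ×ˢ AvSet perm231 (n - ℓ),
        if RealizesAtMax π (glue ℓ x.1 x.2) then 1 else 0 := by
    rw [maxRealizations, card_filter, sum_avSet_succ]
  rw [hR, occTotal, sum_avSet_succ, ← Fin.sum_univ_eq_sum_range
    (fun i => occTotal π i * avCount (n - i) + avCount i * occTotal π (n - i)),
    ← sum_add_distrib]
  refine sum_congr rfl fun ℓ _ => ?_
  simp only [cOcc_glue, sum_add_distrib, sum_product, sum_const, smul_eq_mul, occTotal, avCount,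
    ← mul_sum]
  ring

end Counting

section Recurrence

variable {p : ℝ} {d c b : ℕ → ℝ}

lemma sum_range_sum_mul_le {f g : ℕ → ℝ} (hf : 0 ≤ f) (hg : 0 ≤ g) (N : ℕ) :
    ∑ n ∈ range N, ∑ i ∈ range (n + 1), f i * g (n - i) ≤
      (∑ i ∈ range N, f i) * ∑ j ∈ range N, g j := by
  rw [sum_range_diag_flip N (fun i j => f i * g j), sum_mul_sum]
  gcongr with i
  · exact fun j _ _ => mul_nonneg (hf i) (hg j)
  · exact Nat.sub_le _ _

lemma hasSum_sum_range_mul {f g : ℕ → ℝ} (hf : Summable f) (hg : Summable g) (hf0 : 0 ≤ f)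
    (hg0 : 0 ≤ g) :
    HasSum (fun n => ∑ i ∈ range (n + 1), f i * g (n - i)) ((∑' n, f n) * ∑' n, g n) := by
  have hfg := hf.mul_of_nonneg hg hf0 hg0
  rw [hf.tsum_mul_tsum_eq_tsum_sum_range hg hfg]
  exact (summable_sum_mul_range_of_summable_mul hfg).hasSum

lemma hasSum_succ_of_hasSum {f : ℕ → ℝ} {a : ℝ} (h : HasSum f a) :
    HasSum (fun n => f (n + 1)) (a - f 0) := by
  simpa using (hasSum_nat_add_iff' 1).2 h

lemma hasSum_one_of_rec (hp : 0 ≤ p) (hp2 : 2 * p < 1) (hd : 0 ≤ d) (hd0 : d 0 = 1 - p)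
    (hrec : ∀ n, d (n + 1) = p * ∑ i ∈ range (n + 1), d i * d (n - i)) : HasSum d 1 := by
  have hpartial : ∀ N, ∑ n ∈ range N, d n ≤ 1 := by
    intro N
    induction N with
    | zero => simp
    | succ N ih =>
      have hS := sum_nonneg fun i (_ : i ∈ range N) => hd i
      have hconv := (sum_range_sum_mul_le hd hd N).trans (mul_le_one₀ ih hS ih)
      rw [sum_range_succ', hd0]
      simp only [hrec, ← mul_sum]
      nlinarith
  have hs : Summable d := summable_of_sum_range_le hd hpartial
  set D := ∑' n, d n
  have hD1 : D ≤ 1 := Real.tsum_le_of_sum_range_le hd hpartial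
  have hquad : D - (1 - p) = p * (D * D) := by
    rw [← hd0]
    refine (hasSum_succ_of_hasSum hs.hasSum).unique ?_
    simpa only [hrec] using (hasSum_sum_range_mul hs hs hd hd).mul_left p
  have hfactor : (1 - D) * (1 - p - p * D) = 0 := by linear_combination -hquad
  have : 0 < 1 - p - p * D := by nlinarith
  obtain hD | hD := mul_eq_zero.1 hfactor
  · exact (sub_eq_zero.1 hD) ▸ hs.hasSum
  · linarith

lemma mul_sum_range_le_of_rec (hp : 0 ≤ p) (hd0 : 0 ≤ d) (hd : HasSum d 1) (hc : 0 ≤ c)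
    (hc0 : c 0 = 0) (hb : 0 ≤ b) (hbs : Summable b) (hb0 : b 0 = 0)
    (hrec : ∀ n, c (n + 1) = p * (∑ i ∈ range (n + 1), c i * d (n - i) +
      ∑ i ∈ range (n + 1), d i * c (n - i)) + b (n + 1)) (N : ℕ) :
    (1 - 2 * p) * ∑ n ∈ range N, c n ≤ ∑' n, b n := by
  cases N with
  | zero => simpa using tsum_nonneg hb
  | succ N =>
    set C := ∑ n ∈ range (N + 1), c n with hC_def
    have hCN : ∑ n ∈ range N, c n ≤ C :=
      sum_le_sum_of_subset_of_nonneg (range_subset_range.2 N.le_succ) fun i _ _ => hc i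
    have hC := sum_nonneg fun i (_ : i ∈ range N) => hc i
    have hD : ∑ n ∈ range N, d n ≤ 1 := sum_le_hasSum _ (fun i _ => hd0 i) hd
    have hcd : ∑ n ∈ range N, ∑ i ∈ range (n + 1), c i * d (n - i) ≤ C :=
      ((sum_range_sum_mul_le hc hd0 N).trans (mul_le_of_le_one_right hC hD)).trans hCN
    have hdc : ∑ n ∈ range N, ∑ i ∈ range (n + 1), d i * c (n - i) ≤ C :=
      ((sum_range_sum_mul_le hd0 hc N).trans (mul_le_of_le_one_left hC hD)).trans hCN
    have hB : ∑ n ∈ range N, b (n + 1) ≤ ∑' n, b n := by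
      have := sum_le_hasSum (range (N + 1)) (fun i _ => hb i) hbs.hasSum
      rwa [sum_range_succ', hb0, add_zero] at this
    have hsucc : C = p * (∑ n ∈ range N, ∑ i ∈ range (n + 1), c i * d (n - i) +
        ∑ n ∈ range N, ∑ i ∈ range (n + 1), d i * c (n - i)) +
        ∑ n ∈ range N, b (n + 1) := by
      rw [hC_def, sum_range_succ', hc0, add_zero]
      simp only [hrec, sum_add_distrib, ← mul_sum]
    nlinarith

lemma summable_and_tsum_of_rec (hp : 0 ≤ p) (hp2 : 2 * p < 1) (hd0 : 0 ≤ d) (hd : HasSum d 1)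
    (hc : 0 ≤ c) (hc0 : c 0 = 0) (hb : 0 ≤ b) (hbs : Summable b) (hb0 : b 0 = 0)
    (hrec : ∀ n, c (n + 1) = p * (∑ i ∈ range (n + 1), c i * d (n - i) +
      ∑ i ∈ range (n + 1), d i * c (n - i)) + b (n + 1)) :
    Summable c ∧ (1 - 2 * p) * ∑' n, c n = ∑' n, b n := by
  have hs : Summable c := summable_of_sum_range_le hc fun N => by
    rw [le_div_iff₀' (by linarith : (0 : ℝ) < 1 - 2 * p)]
    exact mul_sum_range_le_of_rec hp hd0 hd hc hc0 hb hbs hb0 hrec N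
  refine ⟨hs, ?_⟩
  have hlhs := hasSum_succ_of_hasSum hs.hasSum
  have hrhs := (((hasSum_sum_range_mul hs hd.summable hc hd0).add
    (hasSum_sum_range_mul hd.summable hs hd0 hc)).mul_left p).add
    (hasSum_succ_of_hasSum hbs.hasSum)
  simp only [← hrec, hd.tsum_eq, hb0, sub_zero] at hrhs
  linarith [hlhs.unique hrhs, hc0]

end Recurrence

section Weights

variable {p : ℝ}

/-- `p` times the weight `p ^ (n - 1) (1 - p) ^ (n + 1)` of the statement; this normalization
makes it multiplicative along `glue`. -/
def sizeWeight (p : ℝ) (n : ℕ) : ℝ := p ^ n * (1 - p) ^ (n + 1)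

lemma sizeWeight_succ {n i : ℕ} (hi : i ≤ n) :
    sizeWeight p (n + 1) = p * (sizeWeight p i * sizeWeight p (n - i)) := by
  obtain ⟨j, rfl⟩ := Nat.exists_eq_add_of_le hi
  simp only [sizeWeight, Nat.add_sub_cancel_left]
  ring

lemma cast_sum_range_mul_sizeWeight (f g : ℕ → ℕ) (n : ℕ) :
    ((∑ i ∈ range (n + 1), f i * g (n - i) : ℕ) : ℝ) * sizeWeight p (n + 1) =
      p * ∑ i ∈ range (n + 1), (f i * sizeWeight p i) * (g (n - i) * sizeWeight p (n - i)) := by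
  push_cast
  rw [sum_mul, mul_sum]
  refine sum_congr rfl fun i hi => ?_
  rw [sizeWeight_succ (Nat.lt_succ_iff.1 (mem_range.1 hi))]
  ring

lemma pow_pred_mul_eq_div (hp : p ≠ 0) {n : ℕ} {x : ℝ} (hx : n = 0 → x = 0) :
    p ^ (n - 1) * (1 - p) ^ (n + 1) * x = x * sizeWeight p n / p := by
  cases n with
  | zero => simp [hx rfl]
  | succ n =>
    simp only [sizeWeight, Nat.add_sub_cancel]
    field_simp
    ring

end Weights

theorem summable_and_tsum_occTotal_mul_sizeWeight {k : ℕ} (π : Perm (Fin (k + 1))) {p : ℝ}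
    (hp : 0 ≤ p) (hp2 : 2 * p < 1) :
    Summable (fun n => occTotal π n * sizeWeight p n) ∧
      (1 - 2 * p) * ∑' n, occTotal π n * sizeWeight p n =
        ∑' n, maxRealizations π n * sizeWeight p n := by
  have hw (n : ℕ) : 0 ≤ sizeWeight p n :=
    mul_nonneg (pow_nonneg hp n) (pow_nonneg (by linarith) _)
  have hnonneg (f : ℕ → ℕ) : 0 ≤ fun n => (f n : ℝ) * sizeWeight p n :=
    fun n => mul_nonneg (Nat.cast_nonneg _) (hw n)
  have hd : HasSum (fun n => (avCount n : ℝ) * sizeWeight p n) 1 :=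
    hasSum_one_of_rec hp hp2 (hnonneg _) (by simp [avCount_zero, sizeWeight])
      fun n => by rw [avCount_succ, cast_sum_range_mul_sizeWeight]
  refine summable_and_tsum_of_rec hp hp2 (hnonneg _) hd (hnonneg _) (by simp [occTotal_zero])
    (hnonneg _) ?_ (by simp [maxRealizations_zero]) fun n => ?_
  · refine hd.summable.of_nonneg_of_le (hnonneg _) fun n => ?_
    gcongr
    · exact hw n
    · exact maxRealizations_le π n
  · rw [occTotal_succ, sum_add_distrib, Nat.cast_add, Nat.cast_add, add_mul, add_mul,
      cast_sum_range_mul_sizeWeight, cast_sum_range_mul_sizeWeight, mul_add]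

theorem expectation_cOcc_eq_inv_delta_mul_prob_general
    {k : ℕ} (hk : 1 ≤ k) (π : Equiv.Perm (Fin k))
    (δ : ℝ) (hδ0 : 0 < δ) (hδ1 : δ < 1) :
    Summable (fun n : ℕ => ∑ σ ∈ AvSet perm231 n,
      ((1 - δ) / 2) ^ (n - 1) * (1 - (1 - δ) / 2) ^ (n + 1) * (cOcc π σ : ℝ))
    ∧ δ * (∑' n : ℕ, ∑ σ ∈ AvSet perm231 n,
        ((1 - δ) / 2) ^ (n - 1) * (1 - (1 - δ) / 2) ^ (n + 1) * (cOcc π σ : ℝ))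
      = ∑' n : ℕ, ∑ σ ∈ AvSet perm231 n,
          (if RealizesAtMax π σ then
            ((1 - δ) / 2) ^ (n - 1) * (1 - (1 - δ) / 2) ^ (n + 1) else 0) := by
  obtain ⟨k, rfl⟩ := Nat.exists_eq_add_of_le' hk
  set p := (1 - δ) / 2 with hp_def
  have hp : 0 < p := by rw [hp_def]; linarith
  obtain ⟨hs, htsum⟩ :=
    summable_and_tsum_occTotal_mul_sizeWeight π hp.le (by rw [hp_def]; linarith)
  have hocc (n : ℕ) :
      ∑ σ ∈ AvSet perm231 n, p ^ (n - 1) * (1 - p) ^ (n + 1) * (cOcc π σ : ℝ) =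
        occTotal π n * sizeWeight p n / p := by
    rw [← mul_sum, ← Nat.cast_sum]
    exact pow_pred_mul_eq_div hp.ne' fun h => by subst h; exact_mod_cast occTotal_zero π
  have hreal (n : ℕ) : ∑ σ ∈ AvSet perm231 n,
      (if RealizesAtMax π σ then p ^ (n - 1) * (1 - p) ^ (n + 1) else 0) =
        maxRealizations π n * sizeWeight p n / p := by
    rw [← sum_filter, sum_const, nsmul_eq_mul, mul_comm]
    exact pow_pred_mul_eq_div hp.ne' fun h => by subst h; exact_mod_cast maxRealizations_zero π
  simp only [hocc, hreal, tsum_div_const, ← htsum]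
  refine ⟨hs.div_const p, ?_⟩
  field_simp
  ring

/-- **Equation (4.4).** Fix `δ ∈ (0,1)` and `p = (1−δ)/2`.  For every pattern
`π ∈ Av(231)`, the series `Σ_{σ ∈ Av(231)} p^(|σ|−1)(1−p)^(|σ|+1) c-occ(π,σ)` converges,
and `δ` times its sum equals
`Σ_{σ ∈ Av(231)} p^(|σ|−1)(1−p)^(|σ|+1) 𝟙{σ realizes π at its maximum}`.
(These are `E[c-occ(π,T_δ)]` and `ℙ(pat_J(T_δ)=π)` respectively.) -/
theorem expectation_cOcc_eq_inv_delta_mul_prob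
    {k : ℕ} (hk : 1 ≤ k) (π : Equiv.Perm (Fin k)) (hπ : Avoids perm231 π)
    (δ : ℝ) (hδ0 : 0 < δ) (hδ1 : δ < 1) :
    Summable (fun n : ℕ => ∑ σ ∈ AvSet perm231 n,
      ((1 - δ) / 2) ^ (n - 1) * (1 - (1 - δ) / 2) ^ (n + 1) * (cOcc π σ : ℝ))
    ∧ δ * (∑' n : ℕ, ∑ σ ∈ AvSet perm231 n,
        ((1 - δ) / 2) ^ (n - 1) * (1 - (1 - δ) / 2) ^ (n + 1) * (cOcc π σ : ℝ))
      = ∑' n : ℕ, ∑ σ ∈ AvSet perm231 n,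
          (if RealizesAtMax π σ then
            ((1 - δ) / 2) ^ (n - 1) * (1 - (1 - δ) / 2) ^ (n + 1) else 0) :=
  expectation_cOcc_eq_inv_delta_mul_prob_general hk π δ hδ0 hδ1
end

section
/- For every pattern π ∈ Av(231), the following two identities hold: Σ_{σ ∈ Av(231)} 4^{−|σ|} · 𝟙{|σ| ≥ |π| and pat_{[1,|π|]}(σ) = π} = 2^{|RLMax(π)|+1}/2^{2|π|}, and Σ_{σ ∈ Av(231)} 4^{−|σ|} · 𝟙{|σ| ≥ |π| and pat_{[|σ|−|π|+1,|σ|]}(σ) = π} = 2^{|LRMax(π)|+1}/2^{2|π|}, where the sums range over 231-avoiding permutations of all sizes n ≥ 1. -/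
open Finset Filter
open scoped Topology Classical

/-!
Appending a value `v` to a 231-avoider `σ` of size `n` keeps it 231-avoiding exactly when `v` is
one of the `rlMax σ + 1` largest of its `n + 1` possible values, and the `rlMax σ + 1` children
obtained have `1, …, rlMax σ + 1` right-to-left maxima, one each. Prepending behaves in the same
way for left-to-right maxima, the admissible first values being `0` and the successors of the
values of the left-to-right maxima. Inserting at the far end does not disturb an occurrence of `π`
at the other end, so the 231-avoiders of size `k + m` starting (ending) with `π` are the nodes at
depth `m` of the Catalan generating tree `(r) ⇝ (1)(2)⋯(r+1)` rooted at `rlMax π` (`lrMax π`).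

With weight `4⁻ᵐ` at depth `m`, the total mass `L r` of that tree from a root `r` satisfies
`L r = 1 + ¼ ∑_{r'=1}^{r+1} L r'` and `0 ≤ L r ≤ 2^(r+1)`. Since `2^(r+1)` solves the same equation,
the difference is an eigenvector of eigenvalue `4` of the tree operator of size `O(2^r)`; such
eigenvectors are multiples of `(r + 1) 2^r`, hence the difference vanishes and `L r = 2^(r+1)`.
-/

/-- The generating-tree rule `(r) ⇝ (1)(2)⋯(r+1)` of the Catalan numbers, acting on weights. -/
def childSum : (ℕ → ℝ) →ₗ[ℝ] ℕ → ℝ where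
  toFun f r := ∑ r' ∈ Icc 1 (r + 1), f r'
  map_add' f g := by ext r; simp [sum_add_distrib]
  map_smul' c f := by ext r; simp [mul_sum]

lemma childSum_apply (f : ℕ → ℝ) (r : ℕ) : childSum f r = ∑ r' ∈ Icc 1 (r + 1), f r' := rfl

lemma childSum_succ (f : ℕ → ℝ) (r : ℕ) : childSum f (r + 1) = childSum f r + f (r + 2) := by
  simp only [childSum_apply]
  exact sum_Icc_succ_top (by omega) f

lemma childSum_pow_nonneg {f : ℕ → ℝ} (hf : ∀ r, 0 ≤ f r) (m r : ℕ) :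
    0 ≤ (childSum ^ m) f r := by
  induction m generalizing r with
  | zero => exact hf r
  | succ m ih =>
    rw [pow_succ', Module.End.mul_apply, childSum_apply]
    exact sum_nonneg fun r' _ => ih r'

lemma childSum_two_pow :
    childSum (fun r => 2 ^ (r + 1)) = (4 : ℝ) • (fun r => 2 ^ (r + 1)) - (4 : ℝ) • 1 := by
  ext r
  induction r with
  | zero => norm_num [childSum_apply]
  | succ r ih =>
    rw [childSum_succ, ih]
    simp only [Pi.sub_apply, Pi.smul_apply, Pi.one_apply, smul_eq_mul]
    ring

lemma eq_mul_two_pow_of_childSum_eq_four_smul {d : ℕ → ℝ} (hd : childSum d = (4 : ℝ) • d)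
    (r : ℕ) : d r = d 0 * (r + 1) * 2 ^ r := by
  have hrec : ∀ r, childSum d r = 4 * d r := fun r => congrFun hd r
  suffices ∀ r, d r = d 0 * (r + 1) * 2 ^ r ∧ d (r + 1) = d 0 * (r + 2) * 2 ^ (r + 1) from
    (this r).1
  intro r
  induction r with
  | zero =>
    have h := hrec 0
    simp only [childSum_apply, zero_add, Icc_self, sum_singleton] at h
    refine ⟨by simp, ?_⟩
    rw [zero_add, h]
    ring
  | succ r ih =>
    refine ⟨by rw [ih.2]; push_cast; ring, ?_⟩
    have h := hrec (r + 1)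
    rw [childSum_succ, hrec r, ih.1, ih.2] at h
    show d (r + 2) = _
    push_cast
    linear_combination h

lemma eq_zero_of_childSum_eq_four_smul {d : ℕ → ℝ} (hd : childSum d = (4 : ℝ) • d) {C : ℝ}
    (hC : ∀ r, |d r| ≤ C * 2 ^ r) : d = 0 := by
  have hd0 : d 0 = 0 := by
    by_contra hne
    have hpos : 0 < |d 0| := abs_pos.2 hne
    obtain ⟨r, hr⟩ := exists_nat_gt (C / |d 0|)
    rw [div_lt_iff₀ hpos] at hr
    have h := hC r
    rw [eq_mul_two_pow_of_childSum_eq_four_smul hd, abs_mul, abs_mul,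
      abs_of_pos (by positivity : (0 : ℝ) < r + 1),
      abs_of_pos (by positivity : (0 : ℝ) < 2 ^ r)] at h
    have h' : |d 0| * (r + 1) ≤ C := le_of_mul_le_mul_right h (by positivity)
    nlinarith
  ext r
  simp [eq_mul_two_pow_of_childSum_eq_four_smul hd r, hd0]

lemma sum_range_childSum_pow_one (M r : ℕ) :
    ∑ m ∈ range M, (childSum ^ m) 1 r / 4 ^ m =
      2 ^ (r + 1) - (childSum ^ M) (fun r => 2 ^ (r + 1)) r / 4 ^ M := by
  induction M with
  | zero => simp
  | succ M ih =>
    rw [sum_range_succ, ih, pow_succ childSum, Module.End.mul_apply, childSum_two_pow, map_sub,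
      map_smul, map_smul]
    simp only [Pi.sub_apply, Pi.smul_apply, smul_eq_mul]
    field_simp
    ring

lemma summable_childSum_pow_one (r : ℕ) : Summable fun m => (childSum ^ m) 1 r / 4 ^ m :=
  summable_of_sum_range_le (c := 2 ^ (r + 1))
    (fun m => div_nonneg (childSum_pow_nonneg (fun _ => zero_le_one) m r) (by positivity))
    fun M => by
      rw [sum_range_childSum_pow_one]
      have := childSum_pow_nonneg (f := fun r => 2 ^ (r + 1)) (fun r => by positivity) M r
      linarith [div_nonneg this (by positivity : (0 : ℝ) ≤ 4 ^ M)]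

lemma tendsto_childSum_pow_two_pow (r : ℕ) :
    Tendsto (fun M => (childSum ^ M) (fun r => 2 ^ (r + 1)) r / 4 ^ M) atTop
      (𝓝 (2 ^ (r + 1) - ∑' m, (childSum ^ m) 1 r / 4 ^ m)) := by
  have := (summable_childSum_pow_one r).hasSum.tendsto_sum_nat.const_sub (2 ^ (r + 1))
  simp only [sum_range_childSum_pow_one, sub_sub_cancel] at this
  exact this

theorem hasSum_childSum_pow_one (r : ℕ) :
    HasSum (fun m => (childSum ^ m) 1 r / 4 ^ m) (2 ^ (r + 1)) := by
  set g : ℕ → ℝ := fun r => 2 ^ (r + 1)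
  set d : ℕ → ℝ := fun r => 2 ^ (r + 1) - ∑' m, (childSum ^ m) 1 r / 4 ^ m
  have hd : childSum d = (4 : ℝ) • d := by
    ext r
    have hlim : Tendsto (fun M => childSum (fun r' => (childSum ^ M) g r' / 4 ^ M) r) atTop
        (𝓝 (childSum d r)) := by
      simpa only [childSum_apply] using
        tendsto_finsetSum _ fun r' _ => tendsto_childSum_pow_two_pow r'
    have hshift : ∀ M, childSum (fun r' => (childSum ^ M) g r' / 4 ^ M) r =
        4 * ((childSum ^ (M + 1)) g r / 4 ^ (M + 1)) := fun M => by
      rw [pow_succ' childSum, Module.End.mul_apply, childSum_apply, childSum_apply, ← sum_div,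
        pow_succ]
      field_simp
    simp only [hshift] at hlim
    exact tendsto_nhds_unique hlim
      (((tendsto_childSum_pow_two_pow r).comp (tendsto_add_atTop_nat 1)).const_mul 4)
  have hbound : ∀ r, |d r| ≤ 2 * 2 ^ r := fun r => by
    have h1 : 0 ≤ d r := ge_of_tendsto' (tendsto_childSum_pow_two_pow r) fun M =>
      div_nonneg (childSum_pow_nonneg (fun r => by positivity) M r) (by positivity)
    have h2 : 0 ≤ ∑' m, (childSum ^ m) 1 r / 4 ^ m := tsum_nonneg fun m =>
      div_nonneg (childSum_pow_nonneg (fun _ => zero_le_one) m r) (by positivity)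
    rw [abs_of_nonneg h1, ← pow_succ']
    linarith
  have hr := congrFun (eq_zero_of_childSum_eq_four_smul hd hbound) r
  simp only [d, Pi.zero_apply, sub_eq_zero] at hr
  exact hr ▸ (summable_childSum_pow_one r).hasSum

section GeneratingTree

variable {α ι β : Type*} [Fintype α] [Fintype ι] [Fintype β]

theorem sum_eq_sum_childSum (e : α × ι ≃ β) (T : Finset α) (T' : Finset β) (s : α → ℕ)
    (s' : β → ℕ) (hparent : ∀ a i, e (a, i) ∈ T' → a ∈ T)
    (hchildren : ∀ a ∈ T, Set.BijOn (fun i => s' (e (a, i))) {i | e (a, i) ∈ T'}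
      (Icc 1 (s a + 1)))
    (f : ℕ → ℝ) : ∑ b ∈ T', f (s' b) = ∑ a ∈ T, childSum f (s a) := by
  have hfiber : ∀ a ∈ T, ∑ i with e (a, i) ∈ T', f (s' (e (a, i))) = childSum f (s a) := by
    intro a ha
    have hbij := hchildren a ha
    rw [show {i | e (a, i) ∈ T'} = ↑(univ.filter fun i => e (a, i) ∈ T') by simp] at hbij
    exact sum_nbij _ (fun i hi => hbij.mapsTo hi) hbij.injOn hbij.surjOn fun _ _ => rfl
  calc ∑ b ∈ T', f (s' b)
      = ∑ p : α × ι, if e p ∈ T' then f (s' (e p)) else 0 := by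
        rw [Fintype.sum_equiv e _ (fun b => if b ∈ T' then f (s' b) else 0) fun _ => rfl,
          sum_ite_mem, univ_inter]
    _ = ∑ a ∈ T, ∑ i with e (a, i) ∈ T', f (s' (e (a, i))) := by
        rw [Fintype.sum_prod_type]
        refine (sum_subset (subset_univ T) fun a _ ha => ?_).symm.trans
          (sum_congr rfl fun a _ => (sum_filter _ _).symm)
        exact sum_eq_zero fun i _ => if_neg fun hi => ha (hparent a i hi)
    _ = ∑ a ∈ T, childSum f (s a) := sum_congr rfl hfiber

theorem sum_eq_sum_childSum_pow {α ι : ℕ → Type*} [∀ n, Fintype (α n)] [∀ n, Fintype (ι n)]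
    (e : ∀ n, α n × ι n ≃ α (n + 1)) (T : ∀ n, Finset (α n)) (s : ∀ n, α n → ℕ) (k : ℕ)
    (hparent : ∀ n ≥ k, ∀ a i, e n (a, i) ∈ T (n + 1) → a ∈ T n)
    (hchildren : ∀ n ≥ k, ∀ a ∈ T n, Set.BijOn (fun i => s (n + 1) (e n (a, i)))
      {i | e n (a, i) ∈ T (n + 1)} (Icc 1 (s n a + 1)))
    (m : ℕ) (f : ℕ → ℝ) :
    ∑ a ∈ T (k + m), f (s _ a) = ∑ a ∈ T k, (childSum ^ m) f (s k a) := by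
  induction m generalizing f with
  | zero => rfl
  | succ m ih =>
    show ∑ a ∈ T (k + m + 1), f (s (k + m + 1) a) = _
    rw [sum_eq_sum_childSum (e (k + m)) _ _ _ _ (hparent _ (by omega))
      (hchildren _ (by omega)), ih, pow_succ]
    rfl

end GeneratingTree

open Equiv

section Insertion

variable {n : ℕ}

noncomputable def snocPerm (σ : Perm (Fin n)) (v : Fin (n + 1)) : Perm (Fin (n + 1)) :=
  .ofBijective (Fin.snoc (v.succAbove ∘ σ) v) <| Finite.injective_iff_bijective.1 <|
    Fin.snoc_injective_of_injective ((Fin.succAbove_right_injective).comp σ.injective)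
      fun ⟨i, hi⟩ => Fin.succAbove_ne v (σ i) hi

noncomputable def consPerm (σ : Perm (Fin n)) (v : Fin (n + 1)) : Perm (Fin (n + 1)) :=
  .ofBijective (Fin.cons v (v.succAbove ∘ σ)) <| Finite.injective_iff_bijective.1 <|
    Fin.cons_injective_of_injective (fun ⟨i, hi⟩ => Fin.succAbove_ne v (σ i) hi)
      ((Fin.succAbove_right_injective).comp σ.injective)

@[simp] lemma snocPerm_castSucc (σ : Perm (Fin n)) (v : Fin (n + 1)) (i : Fin n) :
    snocPerm σ v i.castSucc = v.succAbove (σ i) := by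
  simp [snocPerm]

@[simp] lemma snocPerm_last (σ : Perm (Fin n)) (v : Fin (n + 1)) :
    snocPerm σ v (Fin.last n) = v := by
  simp [snocPerm]

@[simp] lemma consPerm_succ (σ : Perm (Fin n)) (v : Fin (n + 1)) (i : Fin n) :
    consPerm σ v i.succ = v.succAbove (σ i) := by
  simp [consPerm]

@[simp] lemma consPerm_zero (σ : Perm (Fin n)) (v : Fin (n + 1)) : consPerm σ v 0 = v := by
  simp [consPerm]

lemma bijective_of_injective_of_perm_fin {f : Perm (Fin n) × Fin (n + 1) → Perm (Fin (n + 1))}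
    (hf : Function.Injective f) : Function.Bijective f :=
  (Fintype.bijective_iff_injective_and_card f).2
    ⟨hf, by simp [Fintype.card_perm, Nat.factorial_succ, mul_comm]⟩

noncomputable def snocPermEquiv (n : ℕ) : Perm (Fin n) × Fin (n + 1) ≃ Perm (Fin (n + 1)) :=
  .ofBijective (fun p => snocPerm p.1 p.2) <| bijective_of_injective_of_perm_fin
    fun ⟨σ, v⟩ ⟨σ', v'⟩ h => by
      obtain rfl : v = v' := by simpa using congr($h (Fin.last n))
      obtain rfl : σ = σ' := Equiv.ext fun i => by simpa using congr($h i.castSucc)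
      rfl

noncomputable def consPermEquiv (n : ℕ) : Perm (Fin n) × Fin (n + 1) ≃ Perm (Fin (n + 1)) :=
  .ofBijective (fun p => consPerm p.1 p.2) <| bijective_of_injective_of_perm_fin
    fun ⟨σ, v⟩ ⟨σ', v'⟩ h => by
      obtain rfl : v = v' := by simpa using congr($h 0)
      obtain rfl : σ = σ' := Equiv.ext fun i => by simpa using congr($h i.succ)
      rfl

@[simp] lemma snocPermEquiv_apply (n : ℕ) (p : Perm (Fin n) × Fin (n + 1)) :
    snocPermEquiv n p = snocPerm p.1 p.2 := rfl

@[simp] lemma consPermEquiv_apply (n : ℕ) (p : Perm (Fin n) × Fin (n + 1)) :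
    consPermEquiv n p = consPerm p.1 p.2 := rfl

end Insertion

section ConsecutiveOccurrence

variable {n : ℕ}

lemma pv_snocPerm (σ : Perm (Fin n)) (v : Fin (n + 1)) {j : ℕ} (hj : j < n) :
    pv (snocPerm σ v) j = v.succAbove (σ ⟨j, hj⟩) := by
  rw [pv_of_lt _ (by omega)]
  exact congrArg Fin.val (snocPerm_castSucc σ v ⟨j, hj⟩)

lemma pv_consPerm_succ (σ : Perm (Fin n)) (v : Fin (n + 1)) {j : ℕ} (hj : j < n) :
    pv (consPerm σ v) (j + 1) = v.succAbove (σ ⟨j, hj⟩) := by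
  rw [pv_of_lt _ (by omega)]
  exact congrArg Fin.val (consPerm_succ σ v ⟨j, hj⟩)

variable {k : ℕ} (π : Perm (Fin k))

theorem isOccAt_snocPerm_iff (σ : Perm (Fin n)) (v : Fin (n + 1)) {i : ℕ} (h : i + k ≤ n) :
    IsOccAt π (snocPerm σ v) i ↔ IsOccAt π σ i := by
  suffices WindowMatch π (snocPerm σ v) i ↔ WindowMatch π σ i by
    unfold IsOccAt
    rw [this]
    exact and_congr_left fun _ => iff_of_true (by omega) h
  refine forall₂_congr fun a b => ?_
  have ha : i + a < n := by omega
  have hb : i + b < n := by omega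
  rw [pv_snocPerm σ v ha, pv_snocPerm σ v hb, pv_of_lt σ ha, pv_of_lt σ hb, ← Fin.lt_def,
    ← Fin.lt_def, Fin.succAbove_lt_succAbove_iff]

theorem isOccAt_consPerm_iff (σ : Perm (Fin n)) (v : Fin (n + 1)) {i : ℕ} (h : i + k ≤ n) :
    IsOccAt π (consPerm σ v) (i + 1) ↔ IsOccAt π σ i := by
  suffices WindowMatch π (consPerm σ v) (i + 1) ↔ WindowMatch π σ i by
    unfold IsOccAt
    rw [this]
    exact and_congr_left fun _ => iff_of_true (by omega) h
  refine forall₂_congr fun a b => ?_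
  have ha : i + a < n := by omega
  have hb : i + b < n := by omega
  rw [add_right_comm, add_right_comm i 1, pv_consPerm_succ σ v ha, pv_consPerm_succ σ v hb,
    pv_of_lt σ ha, pv_of_lt σ hb, ← Fin.lt_def, ← Fin.lt_def, Fin.succAbove_lt_succAbove_iff]

theorem isOccAt_zero_iff (σ : Perm (Fin k)) : IsOccAt π σ 0 ↔ σ = π := by
  have hmatch : WindowMatch π σ 0 ↔ ∀ a b, σ a < σ b ↔ π a < π b := by
    simp [WindowMatch, pv]
  simp only [IsOccAt, zero_add, le_refl, true_and, hmatch]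
  refine ⟨fun h => ?_, fun h => h ▸ fun _ _ => Iff.rfl⟩
  have hid : StrictMono (σ ∘ π.symm) := fun x y hxy => (h _ _).2 (by simpa using hxy)
  ext a
  simpa using congrArg Fin.val (congrFun hid.eq_id (π a))

end ConsecutiveOccurrence

section Pattern231

variable {n : ℕ}

theorem contains_perm231_iff_s11 (τ : Perm (Fin n)) :
    Contains perm231 τ ↔ ∃ p q r, p < q ∧ q < r ∧ τ r < τ p ∧ τ p < τ q := by
  constructor
  · rintro ⟨f, hf, hord⟩
    exact ⟨f 0, f 1, f 2, hf (by decide), hf (by decide), (hord 2 0).2 (by decide),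
      (hord 0 1).2 (by decide)⟩
  · rintro ⟨p, q, r, hpq, hqr, hrp, hpq'⟩
    refine ⟨![p, q, r], fun a b hab => ?_, fun a b => ?_⟩
    · fin_cases a <;> fin_cases b <;> simp_all [hpq.trans hqr]
    · fin_cases a <;> fin_cases b <;> simp [perm231] <;> order

def IsRLMax (σ : Perm (Fin n)) (i : Fin n) : Prop := ∀ j, i < j → σ j < σ i

def IsLRMax (σ : Perm (Fin n)) (i : Fin n) : Prop := ∀ j, j < i → σ j < σ i

lemma rlMax_eq_card (σ : Perm (Fin n)) : rlMax σ = #{i | IsRLMax σ i} := by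
  unfold rlMax IsRLMax; congr

lemma lrMax_eq_card (σ : Perm (Fin n)) : lrMax σ = #{i | IsLRMax σ i} := by
  unfold lrMax IsLRMax; congr

lemma rlMax_le (σ : Perm (Fin n)) : rlMax σ ≤ n :=
  (card_filter_le _ _).trans_eq (card_fin n)

lemma not_isRLMax_iff {σ : Perm (Fin n)} {i : Fin n} : ¬IsRLMax σ i ↔ ∃ j, i < j ∧ σ i < σ j := by
  simp only [IsRLMax, not_forall, not_lt, exists_prop]
  exact exists_congr fun j => and_congr_right fun hij =>
    le_iff_lt_or_eq.trans (or_iff_left (σ.injective.ne hij.ne))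

lemma lt_of_not_isRLMax {σ : Perm (Fin n)} (hσ : Avoids perm231 σ) {i l : Fin n}
    (hi : ¬IsRLMax σ i) (hl : IsRLMax σ l) : σ i < σ l := by
  obtain ⟨j, hij, hσij⟩ := not_isRLMax_iff.1 hi
  by_contra! hli
  rcases lt_trichotomy l i with hli' | rfl | hil
  · exact (hl i hli').not_ge hli
  · exact (hl j hij).not_gt hσij
  rcases lt_trichotomy j l with hjl | rfl | hlj
  · exact hσ ((contains_perm231_iff_s11 σ).2 ⟨i, j, l, hij, hjl,
      lt_of_le_of_ne hli (σ.injective.ne hil.ne'), hσij⟩)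
  · exact hσij.not_ge hli
  · exact (hl j hlj).not_ge (hli.trans hσij.le)

/-- The right-to-left maxima of a 231-avoider are the entries with the `rlMax σ` largest values. -/
theorem isRLMax_iff {σ : Perm (Fin n)} (hσ : Avoids perm231 σ) (i : Fin n) :
    IsRLMax σ i ↔ n ≤ σ i + rlMax σ := by
  rw [rlMax_eq_card]
  constructor
  · intro hi
    have : #(Ici (σ i)) ≤ #{l | IsRLMax σ l} :=
      card_le_card_of_injOn σ.symm (fun y hy => by
        by_contra hl
        have := lt_of_not_isRLMax hσ (by simpa using hl) hi
        simp only [apply_symm_apply, coe_Ici, Set.mem_Ici] at this hy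
        exact this.not_ge hy) σ.symm.injective.injOn
    rw [Fin.card_Ici] at this
    omega
  · intro hbig
    by_contra hi
    have : #{l | IsRLMax σ l} ≤ #(Ioi (σ i)) :=
      card_le_card_of_injOn σ (fun l hl => by
        simpa using lt_of_not_isRLMax hσ hi (by simpa using hl)) σ.injective.injOn
    rw [Fin.card_Ioi] at this
    have := (σ i).isLt
    omega

end Pattern231

section Appending

variable {n : ℕ}

theorem contains_perm231_snocPerm_iff (σ : Perm (Fin n)) (v : Fin (n + 1)) :
    Contains perm231 (snocPerm σ v) ↔
      Contains perm231 σ ∨ ∃ i, ¬IsRLMax σ i ∧ v ≤ (σ i).castSucc := by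
  simp only [contains_perm231_iff_s11, not_isRLMax_iff]
  constructor
  · rintro ⟨p, q, r, hpq, hqr, hrp, hpq'⟩
    induction p using Fin.lastCases with
    | last => exact absurd (hpq.trans hqr) (Fin.le_last r).not_gt
    | cast p => induction q using Fin.lastCases with
      | last => exact absurd hqr (Fin.le_last r).not_gt
      | cast q => induction r using Fin.lastCases with
        | last =>
          simp only [snocPerm_castSucc, snocPerm_last, Fin.lt_succAbove_iff_le_castSucc,
            Fin.succAbove_lt_succAbove_iff] at hrp hpq'
          exact .inr ⟨p, ⟨q, by simpa using hpq, hpq'⟩, hrp⟩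
        | cast r =>
          simp only [snocPerm_castSucc, Fin.succAbove_lt_succAbove_iff,
            Fin.castSucc_lt_castSucc_iff] at *
          exact .inl ⟨p, q, r, hpq, hqr, hrp, hpq'⟩
  · rintro (⟨p, q, r, hpq, hqr, hrp, hpq'⟩ | ⟨i, ⟨j, hij, hσ⟩, hv⟩)
    · exact ⟨p.castSucc, q.castSucc, r.castSucc, by simpa, by simpa, by simpa, by simpa⟩
    · exact ⟨i.castSucc, j.castSucc, Fin.last n, by simpa, Fin.castSucc_lt_last j,
        by simpa [Fin.lt_succAbove_iff_le_castSucc], by simpa⟩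

lemma avoids_of_avoids_snocPerm {σ : Perm (Fin n)} {v : Fin (n + 1)}
    (h : Avoids perm231 (snocPerm σ v)) : Avoids perm231 σ :=
  fun hσ => h ((contains_perm231_snocPerm_iff σ v).2 (.inl hσ))

theorem avoids_perm231_snocPerm_iff {σ : Perm (Fin n)} (hσ : Avoids perm231 σ)
    (v : Fin (n + 1)) : Avoids perm231 (snocPerm σ v) ↔ n ≤ v + rlMax σ := by
  have hmax := isRLMax_iff hσ
  unfold Avoids at hσ ⊢
  simp only [contains_perm231_snocPerm_iff, hσ, false_or, not_exists, not_and, hmax, not_le]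
  constructor
  · intro h
    by_contra! hv
    have hvn : (v : ℕ) < n := by omega
    exact (h (σ.symm ⟨v, hvn⟩) (by simpa using hv)).not_ge (by simp)
  · intro h i hi
    rw [Fin.lt_def, Fin.val_castSucc]
    omega

theorem rlMax_snocPerm {σ : Perm (Fin n)} {v : Fin (n + 1)}
    (h : Avoids perm231 (snocPerm σ v)) : rlMax (snocPerm σ v) = n + 1 - v := by
  set τ := snocPerm σ v
  have hlast : n + 1 ≤ v + rlMax τ := by
    simpa [τ] using (isRLMax_iff h (Fin.last n)).1 fun j hj => absurd hj (Fin.le_last j).not_gt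
  suffices rlMax τ + v ≤ n + 1 by omega
  rcases eq_or_ne v 0 with rfl | hv
  · simpa using rlMax_le τ
  have hv' : (v : ℕ) - 1 < n + 1 := by omega
  set p := τ.symm ⟨v - 1, hv'⟩
  have hτp : (τ p : ℕ) = v - 1 := by simp [p]
  have hp : p < Fin.last n := by
    refine Fin.lt_last_iff_ne_last.2 fun hp => ?_
    rw [hp, snocPerm_last] at hτp
    have := Fin.pos_iff_ne_zero.2 hv
    omega
  have : ¬IsRLMax τ p := fun hmax => by
    have := hmax _ hp
    rw [snocPerm_last, Fin.lt_def, hτp] at this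
    omega
  rw [isRLMax_iff h, hτp] at this
  omega

theorem bijOn_rlMax_snocPerm {σ : Perm (Fin n)} (hσ : Avoids perm231 σ) :
    Set.BijOn (fun v => rlMax (snocPerm σ v)) {v | Avoids perm231 (snocPerm σ v)}
      (Icc 1 (rlMax σ + 1)) := by
  have hval : ∀ v : Fin (n + 1), n ≤ v + rlMax σ → rlMax (snocPerm σ v) = n + 1 - v :=
    fun v hv => rlMax_snocPerm ((avoids_perm231_snocPerm_iff hσ v).2 hv)
  have hR := rlMax_le σ
  rw [show {v | Avoids perm231 (snocPerm σ v)} = {v : Fin (n + 1) | n ≤ v + rlMax σ} from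
    Set.ext (avoids_perm231_snocPerm_iff hσ)]
  refine ⟨fun v (hv : n ≤ v + rlMax σ) => ?_,
    fun v (hv : n ≤ v + rlMax σ) w (hw : n ≤ w + rlMax σ) hvw => ?_, fun r hr => ?_⟩
  · have := v.isLt
    simp only [mem_coe, mem_Icc, hval v hv]
    omega
  · have := v.isLt
    have := w.isLt
    simp only [hval v hv, hval w hw] at hvw
    exact Fin.ext (by omega)
  · rw [mem_coe, mem_Icc] at hr
    have hv : n + 1 - r < n + 1 := by omega
    have hmem : n ≤ (⟨n + 1 - r, hv⟩ : Fin (n + 1)) + rlMax σ := by simp only; omega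
    exact ⟨⟨n + 1 - r, hv⟩, hmem, by simp only [hval _ hmem]; omega⟩

end Appending

section Prepending

variable {n : ℕ}

theorem contains_perm231_consPerm_iff (σ : Perm (Fin n)) (v : Fin (n + 1)) :
    Contains perm231 (consPerm σ v) ↔
      Contains perm231 σ ∨ ∃ i j, i < j ∧ (σ j).castSucc < v ∧ v ≤ (σ i).castSucc := by
  simp only [contains_perm231_iff_s11]
  constructor
  · rintro ⟨p, q, r, hpq, hqr, hrp, hpq'⟩
    induction r using Fin.cases with
    | zero => exact absurd (hpq.trans hqr) (Fin.zero_le p).not_gt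
    | succ r => induction q using Fin.cases with
      | zero => exact absurd hpq (Fin.zero_le p).not_gt
      | succ q => induction p using Fin.cases with
        | zero =>
          simp only [consPerm_succ, consPerm_zero, Fin.lt_succAbove_iff_le_castSucc,
            Fin.succAbove_lt_iff_castSucc_lt] at hrp hpq'
          exact .inr ⟨q, r, by simpa using hqr, hrp, hpq'⟩
        | succ p =>
          simp only [consPerm_succ, Fin.succAbove_lt_succAbove_iff, Fin.succ_lt_succ_iff] at *
          exact .inl ⟨p, q, r, hpq, hqr, hrp, hpq'⟩
  · rintro (⟨p, q, r, hpq, hqr, hrp, hpq'⟩ | ⟨i, j, hij, hj, hi⟩)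
    · exact ⟨p.succ, q.succ, r.succ, by simpa, by simpa, by simpa, by simpa⟩
    · exact ⟨0, i.succ, j.succ, Fin.succ_pos i, by simpa,
        by simpa [Fin.succAbove_lt_iff_castSucc_lt], by simpa [Fin.lt_succAbove_iff_le_castSucc]⟩

lemma avoids_of_avoids_consPerm {σ : Perm (Fin n)} {v : Fin (n + 1)}
    (h : Avoids perm231 (consPerm σ v)) : Avoids perm231 σ :=
  fun hσ => h ((contains_perm231_consPerm_iff σ v).2 (.inl hσ))

theorem avoids_perm231_consPerm_iff {σ : Perm (Fin n)} (hσ : Avoids perm231 σ)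
    (v : Fin (n + 1)) :
    Avoids perm231 (consPerm σ v) ↔ v = 0 ∨ ∃ i, IsLRMax σ i ∧ (σ i).succ = v := by
  unfold Avoids at hσ ⊢
  simp only [contains_perm231_consPerm_iff, hσ, false_or, not_exists, not_and, not_le]
  constructor
  · refine fun h => or_iff_not_imp_left.2 fun hv => ⟨σ.symm (v.pred hv), fun j hji => ?_, by simp⟩
    -- a larger entry left of the value `v - 1` would straddle `v` together with it
    by_contra! hle
    have hlt := lt_of_le_of_ne hle (σ.injective.ne hji.ne')
    refine (h j _ hji (by simp [Fin.castSucc_lt_iff_succ_le])).not_ge ?_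
    rw [← Fin.succ_pred v hv, Fin.succ_le_castSucc_iff]
    simpa using hlt
  · rintro (rfl | ⟨p, hp, rfl⟩) i j hij hj
    · exact absurd hj (Fin.zero_le _).not_gt
    rw [Fin.castSucc_lt_succ_iff] at hj ⊢
    by_contra! hpi
    rcases lt_trichotomy i p with hip | rfl | hpi'
    · exact (hp i hip).not_gt hpi
    · exact hpi.false
    · exact hσ ((contains_perm231_iff_s11 σ).2 ⟨p, i, j, hpi', hij,
        lt_of_le_of_ne hj (σ.injective.ne (hpi'.trans hij).ne'), hpi⟩)

lemma isLRMax_consPerm_zero (σ : Perm (Fin n)) (v : Fin (n + 1)) : IsLRMax (consPerm σ v) 0 :=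
  fun j hj => absurd hj (Fin.zero_le j).not_gt

lemma isLRMax_consPerm_succ_iff (σ : Perm (Fin n)) (v : Fin (n + 1)) (i : Fin n) :
    IsLRMax (consPerm σ v) i.succ ↔ IsLRMax σ i ∧ v ≤ (σ i).castSucc := by
  constructor
  · intro h
    refine ⟨fun j hji => ?_, ?_⟩
    · simpa using h j.succ (Fin.succ_lt_succ_iff.2 hji)
    · simpa [Fin.lt_succAbove_iff_le_castSucc] using h 0 (Fin.succ_pos i)
  · rintro ⟨hi, hv⟩ j hji
    induction j using Fin.cases with
    | zero => simpa [Fin.lt_succAbove_iff_le_castSucc] using hv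
    | succ j => simpa using hi j (Fin.succ_lt_succ_iff.1 hji)

theorem lrMax_consPerm (σ : Perm (Fin n)) (v : Fin (n + 1)) :
    lrMax (consPerm σ v) = #{i | IsLRMax σ i ∧ v ≤ (σ i).castSucc} + 1 := by
  rw [lrMax_eq_card, Fin.card_filter_univ_succ, if_pos (isLRMax_consPerm_zero σ v)]
  simp only [isLRMax_consPerm_succ_iff]

lemma lrMax_consPerm_lt {σ : Perm (Fin n)} {v : Fin (n + 1)} {p : Fin n} (hp : IsLRMax σ p)
    (hvp : v < (σ p).succ) : lrMax (consPerm σ (σ p).succ) < lrMax (consPerm σ v) := by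
  rw [lrMax_consPerm, lrMax_consPerm, add_lt_add_iff_right]
  refine card_lt_card ⟨fun i hi => ?_, fun hsub => ?_⟩
  · simp only [mem_filter, mem_univ, true_and] at hi ⊢
    exact ⟨hi.1, hvp.le.trans hi.2⟩
  have hp' := hsub (mem_filter.2 ⟨mem_univ p, hp, Fin.le_castSucc_iff.2 hvp⟩)
  exact Fin.castSucc_lt_succ.not_ge (mem_filter.1 hp').2.2

theorem bijOn_lrMax_consPerm {σ : Perm (Fin n)} (hσ : Avoids perm231 σ) :
    Set.BijOn (fun v => lrMax (consPerm σ v)) {v | Avoids perm231 (consPerm σ v)}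
      (Icc 1 (lrMax σ + 1)) := by
  set A : Finset (Fin (n + 1)) := {v | Avoids perm231 (consPerm σ v)}
  rw [show {v | Avoids perm231 (consPerm σ v)} = (A : Set (Fin (n + 1))) by simp [A]]
  have hA : ∀ v, v ∈ A ↔ v = 0 ∨ ∃ i, IsLRMax σ i ∧ (σ i).succ = v := fun v => by
    simp [A, avoids_perm231_consPerm_iff hσ]
  have hmaps : Set.MapsTo (fun v => lrMax (consPerm σ v)) A (Icc 1 (lrMax σ + 1)) := by
    intro v _
    simp only [coe_Icc, Set.mem_Icc]
    rw [lrMax_consPerm, lrMax_eq_card σ]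
    refine ⟨by omega, Nat.succ_le_succ (card_le_card fun i hi => ?_)⟩
    simp only [mem_filter, mem_univ, true_and] at hi ⊢
    exact hi.1
  have hinj : Set.InjOn (fun v => lrMax (consPerm σ v)) A := by
    refine StrictAntiOn.injOn fun v _ w hw hvw => ?_
    obtain rfl | ⟨p, hp, rfl⟩ := (hA w).1 hw
    · exact absurd hvw (Fin.zero_le v).not_gt
    · exact lrMax_consPerm_lt hp hvw
  have hcard : #(Icc 1 (lrMax σ + 1)) ≤ #A := by
    have hsub : insert 0 ((univ.filter (IsLRMax σ)).image fun i => (σ i).succ) ⊆ A := by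
      intro v hv
      simp only [mem_insert, mem_image, mem_filter, mem_univ, true_and] at hv
      exact (hA v).2 hv
    refine le_trans (le_of_eq ?_) (card_le_card hsub)
    rw [card_insert_of_notMem (by simp [Fin.succ_ne_zero]), card_image_of_injective _
      fun a b h => σ.injective (Fin.succ_injective _ h), Nat.card_Icc, lrMax_eq_card]
    simp
  exact ⟨hmaps, hinj, surjOn_of_injOn_of_card_le _ hmaps hinj hcard⟩

end Prepending

section Occurrences

variable {k : ℕ} {π : Perm (Fin k)}

lemma filter_avSet_isOccAt_zero (hπ : Avoids perm231 π) :
    {σ ∈ AvSet perm231 k | IsOccAt π σ 0} = {π} := by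
  ext σ
  simp only [AvSet, mem_filter, mem_univ, true_and, isOccAt_zero_iff, mem_singleton]
  exact ⟨And.right, fun h => ⟨h ▸ hπ, h⟩⟩

theorem card_prefix_occurrences (hπ : Avoids perm231 π) (m : ℕ) :
    (#{σ ∈ AvSet perm231 (k + m) | IsOccAt π σ 0} : ℝ) = (childSum ^ m) 1 (rlMax π) := by
  have key := sum_eq_sum_childSum_pow snocPermEquiv
    (fun n => {σ ∈ AvSet perm231 n | IsOccAt π σ 0}) (fun _ σ => rlMax σ) k
    (fun n hn σ v h => by
      simp only [AvSet, mem_filter, mem_univ, true_and, snocPermEquiv_apply] at h ⊢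
      exact ⟨avoids_of_avoids_snocPerm h.1, (isOccAt_snocPerm_iff π σ v (by omega)).1 h.2⟩)
    (fun n hn σ hσ => by
      simp only [AvSet, mem_filter, mem_univ, true_and] at hσ
      have hocc := fun v => isOccAt_snocPerm_iff π σ v (show 0 + k ≤ n by omega)
      have hset : {v | snocPermEquiv n (σ, v) ∈ {τ ∈ AvSet perm231 (n + 1) | IsOccAt π τ 0}} =
          {v | Avoids perm231 (snocPerm σ v)} := by
        ext v
        simp only [Set.mem_ofPred_eq, AvSet, mem_filter, mem_univ, true_and, snocPermEquiv_apply,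
          hocc, hσ.2, and_true]
      exact hset ▸ bijOn_rlMax_snocPerm hσ.1)
    m 1
  rw [filter_avSet_isOccAt_zero hπ, sum_singleton] at key
  rw [cast_card]
  exact key

theorem card_suffix_occurrences (hπ : Avoids perm231 π) (m : ℕ) :
    (#{σ ∈ AvSet perm231 (k + m) | IsOccAt π σ (k + m - k)} : ℝ) =
      (childSum ^ m) 1 (lrMax π) := by
  have hocc : ∀ n ≥ k, ∀ (σ : Perm (Fin n)) v,
      IsOccAt π (consPerm σ v) (n + 1 - k) ↔ IsOccAt π σ (n - k) := fun n hn σ v => by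
    rw [show n + 1 - k = n - k + 1 by omega]
    exact isOccAt_consPerm_iff π σ v (by omega)
  have key := sum_eq_sum_childSum_pow consPermEquiv
    (fun n => {σ ∈ AvSet perm231 n | IsOccAt π σ (n - k)}) (fun _ σ => lrMax σ) k
    (fun n hn σ v h => by
      simp only [AvSet, mem_filter, mem_univ, true_and, consPermEquiv_apply] at h ⊢
      exact ⟨avoids_of_avoids_consPerm h.1, (hocc n hn σ v).1 h.2⟩)
    (fun n hn σ hσ => by
      simp only [AvSet, mem_filter, mem_univ, true_and] at hσ
      have hset : {v | consPermEquiv n (σ, v) ∈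
          {τ ∈ AvSet perm231 (n + 1) | IsOccAt π τ (n + 1 - k)}} =
          {v | Avoids perm231 (consPerm σ v)} := by
        ext v
        simp only [Set.mem_ofPred_eq, AvSet, mem_filter, mem_univ, true_and, consPermEquiv_apply,
          hocc n hn, hσ.2, and_true]
      exact hset ▸ bijOn_lrMax_consPerm hσ.1)
    m 1
  beta_reduce at key
  rw [Nat.sub_self, filter_avSet_isOccAt_zero hπ, sum_singleton] at key
  rw [cast_card]
  exact key

theorem tsum_occurrence_weights (pos : ℕ → ℕ) {r : ℕ}
    (hcount : ∀ m, (#{σ ∈ AvSet perm231 (k + m) | IsOccAt π σ (pos (k + m))} : ℝ) =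
      (childSum ^ m) 1 r) :
    ∑' n, ∑ σ ∈ AvSet perm231 n, (if IsOccAt π σ (pos n) then ((1 : ℝ) / 4) ^ n else 0) =
      2 ^ (r + 1) / 2 ^ (2 * k) := by
  set a : ℕ → ℝ := fun n =>
    ∑ σ ∈ AvSet perm231 n, if IsOccAt π σ (pos n) then ((1 : ℝ) / 4) ^ n else 0
  have ha : ∀ n, a n = #{σ ∈ AvSet perm231 n | IsOccAt π σ (pos n)} * ((1 : ℝ) / 4) ^ n :=
    fun n => by simp [a, ← sum_filter]
  have hzero : ∀ n ∉ Set.range (k + ·), a n = 0 := fun n hn => by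
    have hnk : n < k := by
      by_contra! h
      exact hn ⟨n - k, by simp only; omega⟩
    rw [ha, card_eq_zero.2 (filter_eq_empty_iff.2 fun σ _ hocc => by have := hocc.1; omega)]
    simp
  have hshift : HasSum (fun m => a (k + m)) (((1 : ℝ) / 4) ^ k * 2 ^ (r + 1)) := by
    have hterm : (fun m => a (k + m)) =
        fun m => ((1 : ℝ) / 4) ^ k * ((childSum ^ m) 1 r / 4 ^ m) := by
      ext m
      rw [ha, hcount, pow_add, one_div, inv_pow, inv_pow]
      ring
    exact hterm ▸ (hasSum_childSum_pow_one r).mul_left _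
  rw [((add_right_injective k).hasSum_iff hzero).1 hshift |>.tsum_eq, pow_mul, one_div, inv_pow]
  norm_num [div_eq_mul_inv, mul_comm]

end Occurrences

theorem critical_GW_begin_end_pattern_probability_general
    {k : ℕ} (π : Equiv.Perm (Fin k)) (hπ : Avoids perm231 π) :
    (∑' n : ℕ, ∑ σ ∈ AvSet perm231 n,
        (if IsOccAt π σ 0 then ((1 : ℝ) / 4) ^ n else 0))
      = 2 ^ (rlMax π + 1) / 2 ^ (2 * k)
    ∧ (∑' n : ℕ, ∑ σ ∈ AvSet perm231 n,
        (if IsOccAt π σ (n - k) then ((1 : ℝ) / 4) ^ n else 0))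
      = 2 ^ (lrMax π + 1) / 2 ^ (2 * k) :=
  ⟨tsum_occurrence_weights (fun _ => 0) (card_prefix_occurrences hπ),
    tsum_occurrence_weights (· - k) (card_suffix_occurrences hπ)⟩

/-- **Observation 4.11.** For every pattern `π ∈ Av(231)`,
`Σ_{σ ∈ Av(231)} 4^(−|σ|) 𝟙{pat_{[1,|π|]}(σ) = π} = 2^(|RLMax(π)|+1)/2^(2|π|)` and
`Σ_{σ ∈ Av(231)} 4^(−|σ|) 𝟙{pat_{[|σ|−|π|+1,|σ|]}(σ) = π} = 2^(|LRMax(π)|+1)/2^(2|π|)`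
(the indicators also require `|σ| ≥ |π|`, which is part of `IsOccAt`). -/
theorem critical_GW_begin_end_pattern_probability
    {k : ℕ} (hk : 1 ≤ k) (π : Equiv.Perm (Fin k)) (hπ : Avoids perm231 π) :
    (∑' n : ℕ, ∑ σ ∈ AvSet perm231 n,
        (if IsOccAt π σ 0 then ((1 : ℝ) / 4) ^ n else 0))
      = 2 ^ (rlMax π + 1) / 2 ^ (2 * k)
    ∧ (∑' n : ℕ, ∑ σ ∈ AvSet perm231 n,
        (if IsOccAt π σ (n - k) then ((1 : ℝ) / 4) ^ n else 0))
      = 2 ^ (lrMax π + 1) / 2 ^ (2 * k) :=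
  critical_GW_begin_end_pattern_probability_general π hπ
end

section
/- Let (B_x)_{x∈ℤ} be i.i.d. fair Bernoulli random variables with values in {−,+} (each sign with probability 1/2), and define the random linear order ≼ on ℤ by: x ≼ y iff (B_x = − and B_y = +) or (B_x = B_y and x ≤ y). Then for every h ≥ 1 and every π ∈ Av^{2h+1}(321), the probability that the restriction of ≼ to [−h,h] induces the pattern π — i.e., that for all i,j ∈ [1,2h+1], (i−h−1) ≼ (j−h−1) if and only if π_i ≤ π_j — equals P_321(π). -/
open Finset Filter
open scoped Topology Classical

open MeasureTheory ProbabilityTheory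

/-- The random total order on `ℤ` built from i.i.d. fair signs `B` (with `false = −`,
`true = +`): `x ≼ y` iff (`B x = −` and `B y = +`) or (`B x = B y` and `x ≤ y`). -/
def ordRel {Ω : Type*} (B : ℤ → Ω → Bool) (ω : Ω) (x y : ℤ) : Prop :=
  (B x ω = false ∧ B y ω = true) ∨ (B x ω = B y ω ∧ x ≤ y)

/-!
Inside a window, `≼` lists the positions of sign `−` in increasing order and then those of
sign `+`. So signs `s` on `n` positions induce `π` exactly when `π⁻¹` increases on the first `m`
values and on the last `n - m`, where `m` is the number of `−` signs, and then `s` is determined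
by `m`: position `i` carries `−` iff `π i < m`. Counting such `m`, i.e. splittings compatible with
every descent of `π⁻¹`, gives `n + 1` for the identity, `1` when `π⁻¹` has one descent and `0`
otherwise; by independence each sign vector has probability `2⁻ⁿ`.
-/

lemma strictMonoOn_of_covBy {α β : Type*} [LinearOrder α] [SuccOrder α] [IsSuccArchimedean α]
    [Preorder β] {f : α → β} {s : Set α} (hs : s.OrdConnected)
    (hf : ∀ a b, a ⋖ b → a ∈ s → b ∈ s → f a < f b) : StrictMonoOn f s :=
  strictMonoOn_of_lt_succ hs fun a ha has hsa => hf a _ (Order.covBy_succ_of_not_isMax ha) has hsa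

lemma Fin.exists_eq_decide_le_of_monotone {n : ℕ} {t : Fin n → Bool} (ht : Monotone t) :
    ∃ m ≤ n, ∀ a, t a = decide (m ≤ (a : ℕ)) := by
  by_cases h : ∃ a, t a = true
  · obtain ⟨a, ha⟩ := h
    have hT : ({a | t a = true} : Finset (Fin n)).Nonempty := ⟨a, by simpa using ha⟩
    set a₀ := ({a | t a = true} : Finset (Fin n)).min' hT
    have ha₀ : t a₀ = true := by simpa using min'_mem _ hT
    refine ⟨a₀, a₀.isLt.le, fun a => Bool.eq_iff_iff.2 ?_⟩
    rw [decide_eq_true_iff, ← Fin.le_def]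
    exact ⟨fun ha => min'_le _ _ (by simpa using ha),
      fun ha => top_le_iff.1 (ha₀ ▸ ht ha : true ≤ t a)⟩
  · simp only [not_exists, Bool.not_eq_true] at h
    exact ⟨n, le_rfl, fun a => by rw [h a]; simp [a.isLt]⟩

namespace SignOrder

def SignLE {α : Type*} [LE α] (s : α → Bool) (x y : α) : Prop :=
  (s x = false ∧ s y = true) ∨ (s x = s y ∧ x ≤ y)

lemma _root_.ordRel_eq_signLE {Ω : Type*} (B : ℤ → Ω → Bool) (ω : Ω) :
    ordRel B ω = SignLE (B · ω) := rfl

lemma _root_.StrictMono.signLE_iff {α β : Type*} [LinearOrder α] [Preorder β] {e : α → β}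
    (he : StrictMono e) (s : β → Bool) (x y : α) :
    SignLE s (e x) (e y) ↔ SignLE (s ∘ e) x y := by
  simp only [SignLE, Function.comp_apply, he.le_iff_le]

variable {n : ℕ}

def descents {α : Type*} [LinearOrder α] (τ : Fin n → α) : Finset (Fin n) :=
  {i | ∃ h : (i : ℕ) + 1 < n, τ ⟨i + 1, h⟩ < τ i}

lemma numDescents_eq_card_descents (τ : Equiv.Perm (Fin n)) :
    numDescents τ = #(descents τ) := rfl

lemma mem_descents_iff {α : Type*} [LinearOrder α] {τ : Fin n → α} {i : Fin n} :
    i ∈ descents τ ↔ ∃ j, i ⋖ j ∧ τ j < τ i := by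
  simp only [descents, mem_filter, mem_univ, true_and, Fin.covBy_iff, Nat.covBy_iff_add_one_eq]
  constructor
  · rintro ⟨h, hlt⟩
    exact ⟨⟨i + 1, h⟩, rfl, hlt⟩
  · rintro ⟨j, hij, hlt⟩
    refine ⟨hij ▸ j.isLt, ?_⟩
    convert hlt

def IncreasingOffSplit {α : Type*} [Preorder α] (τ : Fin n → α) (m : ℕ) : Prop :=
  StrictMonoOn τ {a | (a : ℕ) < m} ∧ StrictMonoOn τ {a | m ≤ (a : ℕ)}

lemma increasingOffSplit_iff {α : Type*} [LinearOrder α] {τ : Fin n → α}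
    (hτ : Function.Injective τ) {m : ℕ} :
    IncreasingOffSplit τ m ↔ ∀ d ∈ descents τ, (d : ℕ) + 1 = m := by
  constructor
  · rintro ⟨hlo, hhi⟩ d hd
    obtain ⟨e, hde, hlt⟩ := mem_descents_iff.1 hd
    have hde' : (d : ℕ) + 1 = e := Nat.covBy_iff_add_one_eq.1 (Fin.covBy_iff.1 hde)
    by_contra hne
    rcases lt_or_ge (e : ℕ) m with he | he
    · exact (hlo (by simp; omega) (by simpa using he) hde.lt).not_gt hlt
    · exact (hhi (by simp; omega) (by simpa using he) hde.lt).not_gt hlt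
  · intro h
    have key : ∀ a b : Fin n, a ⋖ b → (b : ℕ) ≠ m → τ a < τ b := by
      intro a b hab hbm
      refine (le_of_not_gt fun hlt => hbm ?_).lt_of_ne (hτ.ne hab.ne)
      rw [← h a (mem_descents_iff.2 ⟨b, hab, hlt⟩),
        Nat.covBy_iff_add_one_eq.1 (Fin.covBy_iff.1 hab)]
    refine ⟨strictMonoOn_of_covBy ?_ fun a b hab _ hb => key a b hab (ne_of_lt hb),
      strictMonoOn_of_covBy ?_ fun a b hab ha _ => key a b hab ?_⟩
    · exact ⟨fun _ _ _ hy _ hz => lt_of_le_of_lt (Fin.le_def.1 hz.2) hy⟩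
    · exact ⟨fun _ hx _ _ _ hz => le_trans hx (Fin.le_def.1 hz.1)⟩
    · have := Fin.lt_def.1 hab.lt
      simp only [Set.mem_ofPred_eq] at ha
      omega

lemma descents_inv_eq_empty_iff {π : Equiv.Perm (Fin n)} : descents ⇑π⁻¹ = ∅ ↔ π = 1 := by
  constructor
  · intro h
    have hmono : StrictMono ⇑π⁻¹ := by
      have := ((increasingOffSplit_iff (π⁻¹).injective (m := 0)).2 (by simp only [h]; simp)).2
      simpa using this
    have : ⇑π⁻¹ = id := (hmono.range_inj strictMono_id).1 (by simp)
    exact inv_eq_one.1 (Equiv.ext (congrFun this))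
  · rintro rfl
    simp only [descents, inv_one, Equiv.Perm.coe_one, id_eq]
    simp [Fin.le_def]

lemma card_filter_forall_succ_eq (D : Finset (Fin n)) :
    #{m ∈ range (n + 1) | ∀ d ∈ D, (d : ℕ) + 1 = m} =
      if D = ∅ then n + 1 else if #D = 1 then 1 else 0 := by
  split_ifs with h0 h1
  · simp [h0]
  · obtain ⟨d, rfl⟩ := card_eq_one.1 h1
    rw [card_eq_one]
    refine ⟨d + 1, ?_⟩
    ext m
    simp only [mem_filter, mem_range, mem_singleton, forall_eq]
    omega
  · have hpos : 0 < #D := card_pos.2 (nonempty_iff_ne_empty.2 h0)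
    obtain ⟨d₁, hd₁, d₂, hd₂, hne⟩ := one_lt_card.1 (by omega : 1 < #D)
    refine card_eq_zero.2 (filter_eq_empty_iff.2 fun m _ hm => hne (Fin.ext ?_))
    have := hm d₁ hd₁
    have := hm d₂ hd₂
    omega

variable {π : Equiv.Perm (Fin n)} {s : Fin n → Bool}

def Matches (π : Equiv.Perm (Fin n)) (s : Fin n → Bool) : Prop :=
  ∀ i j, SignLE s i j ↔ π i ≤ π j

def thresholdSigns (π : Equiv.Perm (Fin n)) (m : ℕ) : Fin n → Bool :=
  fun i => decide (m ≤ (π i : ℕ))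

lemma Matches.monotone (hs : Matches π s) : Monotone (s ∘ ⇑π⁻¹) := by
  intro a b hab
  by_contra hlt
  rw [not_le, Bool.lt_iff] at hlt
  obtain ⟨hb, ha⟩ := hlt
  have hba := (hs (π⁻¹ b) (π⁻¹ a)).1 (Or.inl ⟨hb, ha⟩)
  simp only [Equiv.Perm.coe_inv, Equiv.apply_symm_apply] at hba
  cases le_antisymm hab hba
  simp_all

lemma Matches.exists_eq_thresholdSigns (hs : Matches π s) : ∃ m ≤ n, s = thresholdSigns π m := by
  obtain ⟨m, hm, ht⟩ := Fin.exists_eq_decide_le_of_monotone hs.monotone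
  exact ⟨m, hm, funext fun i => by simpa [thresholdSigns] using ht (π i)⟩

lemma matches_thresholdSigns_iff {m : ℕ} :
    Matches π (thresholdSigns π m) ↔ IncreasingOffSplit ⇑π⁻¹ m := by
  simp only [Matches, SignLE, thresholdSigns, IncreasingOffSplit]
  constructor
  · intro h
    have key : ∀ a b : Fin n, ((a : ℕ) < m ↔ (b : ℕ) < m) → a < b → π⁻¹ a < π⁻¹ b := by
      intro a b hab hlt
      have := (h (π⁻¹ a) (π⁻¹ b)).2
      simp only [Equiv.Perm.coe_inv, Equiv.apply_symm_apply] at this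
      refine lt_of_le_of_ne ?_ ((π⁻¹).injective.ne hlt.ne)
      rcases this hlt.le with ⟨h₁, h₂⟩ | ⟨-, hle⟩
      · simp only [decide_eq_false_iff_not, decide_eq_true_eq] at h₁ h₂
        omega
      · exact hle
    exact ⟨fun a (ha : (a : ℕ) < m) b (hb : (b : ℕ) < m) => key a b (by simp [ha, hb]),
      fun a (ha : m ≤ (a : ℕ)) b (hb : m ≤ (b : ℕ)) => key a b (by omega)⟩
  · rintro ⟨hlo, hhi⟩ i j
    have hmono : ∀ a b : Fin n, ((a : ℕ) < m ↔ (b : ℕ) < m) → (π⁻¹ a ≤ π⁻¹ b ↔ a ≤ b) := by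
      intro a b hab
      by_cases ha : (a : ℕ) < m
      · exact hlo.le_iff_le ha (hab.1 ha)
      · exact hhi.le_iff_le (not_lt.1 ha) (not_lt.1 (mt hab.2 ha))
    have hij := hmono (π i) (π j)
    simp only [Equiv.Perm.coe_inv, Equiv.symm_apply_apply, Fin.le_def (a := π i)] at hij ⊢
    by_cases hi : m ≤ (π i : ℕ) <;> by_cases hj : m ≤ (π j : ℕ) <;>
      simp only [hi, hj, decide_true, decide_false] <;> grind

lemma thresholdSigns_injOn (π : Equiv.Perm (Fin n)) :
    Set.InjOn (thresholdSigns π) (range (n + 1)) := by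
  intro m₁ hm₁ m₂ hm₂ heq
  have h₁ := mem_range.1 (mem_coe.1 hm₁)
  have h₂ := mem_range.1 (mem_coe.1 hm₂)
  by_contra hne
  have := congrFun heq (π⁻¹ ⟨min m₁ m₂, by omega⟩)
  simp [thresholdSigns] at this
  omega

lemma card_matches (π : Equiv.Perm (Fin n)) :
    #{s | Matches π s} = #{m ∈ range (n + 1) | IncreasingOffSplit ⇑π⁻¹ m} := by
  rw [← card_image_of_injOn ((thresholdSigns_injOn π).mono (coe_subset.2 (filter_subset _ _)))]
  congr 1
  ext s
  simp only [mem_filter, mem_univ, true_and, mem_image, mem_range]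
  constructor
  · intro hs
    obtain ⟨m, hm, rfl⟩ := hs.exists_eq_thresholdSigns
    exact ⟨m, ⟨by omega, matches_thresholdSigns_iff.1 hs⟩, rfl⟩
  · rintro ⟨m, ⟨-, hm⟩, rfl⟩
    exact matches_thresholdSigns_iff.2 hm

theorem P321_eq_card_matches_div_two_pow (π : Equiv.Perm (Fin n)) :
    P321 π = #{s | Matches π s} / 2 ^ n := by
  rw [card_matches, filter_congr fun m _ => increasingOffSplit_iff (π⁻¹).injective,
    card_filter_forall_succ_eq, ← numDescents_eq_card_descents, P321]
  simp only [descents_inv_eq_empty_iff]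
  split_ifs <;> push_cast <;> ring

end SignOrder

section Probability

variable {Ω ι : Type*} [MeasurableSpace Ω] {μ : Measure Ω} [IsProbabilityMeasure μ]

lemma measure_eq_inv_two_of_fair {X : Ω → Bool} (hX : Measurable X)
    (hfair : μ {ω | X ω = true} = 1 / 2) (b : Bool) : μ {ω | X ω = b} = 2⁻¹ := by
  cases b
  · have : {ω | X ω = false} = {ω | X ω = true}ᶜ := by ext; simp
    have htrue : MeasurableSet {ω | X ω = true} := hX (measurableSet_singleton true)
    rw [this, prob_compl_eq_one_sub htrue, hfair, one_div, ENNReal.one_sub_inv_two]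
  · rw [hfair, one_div]

variable {κ : Type*} [Fintype κ] {B : ι → Ω → Bool} {e : κ → ι}

lemma measure_forall_eq_of_iIndepFun (hmeas : ∀ x, Measurable (B x)) (hindep : iIndepFun B μ)
    (hfair : ∀ x, μ {ω | B x ω = true} = 1 / 2) (he : Function.Injective e) (s : κ → Bool) :
    μ {ω | ∀ i, B (e i) ω = s i} = 2⁻¹ ^ Fintype.card κ := by
  have : {ω | ∀ i, B (e i) ω = s i} = ⋂ i, B (e i) ⁻¹' {s i} := by ext; simp
  rw [this, (hindep.precomp he).meas_iInter fun i => ⟨{s i}, measurableSet_singleton _, rfl⟩]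
  simp [Set.preimage, measure_eq_inv_two_of_fair (hmeas _) (hfair _)]

lemma measure_mem_finset_of_iIndepFun (hmeas : ∀ x, Measurable (B x)) (hindep : iIndepFun B μ)
    (hfair : ∀ x, μ {ω | B x ω = true} = 1 / 2) (he : Function.Injective e)
    (A : Finset (κ → Bool)) :
    μ {ω | (fun i => B (e i) ω) ∈ A} = #A * 2⁻¹ ^ Fintype.card κ := by
  have hX : Measurable fun ω i => B (e i) ω := measurable_pi_iff.2 fun i => hmeas (e i)
  change μ ((fun ω i => B (e i) ω) ⁻¹' A) = _
  rw [← sum_measure_preimage_singleton A fun s _ => hX (measurableSet_singleton s),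
    sum_congr rfl fun s _ => ?_, sum_const, nsmul_eq_mul]
  rw [← measure_forall_eq_of_iIndepFun hmeas hindep hfair he s]
  congr 1
  ext ω
  simp [funext_iff]

end Probability

theorem limiting_order_321_pattern_probability_general
    {Ω : Type*} [MeasurableSpace Ω] (μ : Measure Ω) [IsProbabilityMeasure μ]
    (B : ℤ → Ω → Bool) (hmeas : ∀ x : ℤ, Measurable (B x))
    (hindep : iIndepFun B μ)
    (hfair : ∀ x : ℤ, μ {ω | B x ω = true} = 1 / 2)
    {h : ℕ} (π : Equiv.Perm (Fin (2 * h + 1))) :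
    μ {ω | ∀ i j : Fin (2 * h + 1),
        ordRel B ω (((i : ℕ) : ℤ) - (h : ℤ)) (((j : ℕ) : ℤ) - (h : ℤ)) ↔ π i ≤ π j}
      = ENNReal.ofReal (P321 π) := by
  set e : Fin (2 * h + 1) → ℤ := fun i => ((i : ℕ) : ℤ) - h
  have he : StrictMono e := fun i j hij => by simpa [e] using hij
  have hevent : {ω | ∀ i j, ordRel B ω (e i) (e j) ↔ π i ≤ π j} =
      {ω | (fun i => B (e i) ω) ∈ ({s | SignOrder.Matches π s} : Finset _)} := by
    ext ω
    simp only [ordRel_eq_signLE, he.signLE_iff, Set.mem_ofPred_eq, mem_filter, mem_univ, true_and]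
    rfl
  rw [hevent, measure_mem_finset_of_iIndepFun hmeas hindep hfair he.injective,
    SignOrder.P321_eq_card_matches_div_two_pow, ENNReal.ofReal_div_of_pos (by positivity)]
  simp [div_eq_mul_inv, ENNReal.inv_pow]

/-- **The limiting order for 321-avoiding permutations.** Let `(B_x)_{x ∈ ℤ}` be i.i.d. fair
Bernoulli signs and let `≼` be the induced random total order on `ℤ`.  Then, for every
`h ≥ 1` and every `π ∈ Av^(2h+1)(321)`, the probability that the restriction of `≼` to
`[−h,h]` induces the pattern `π` — i.e. `(i−h−1) ≼ (j−h−1) ↔ π_i ≤ π_j` for all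
`i,j ∈ [1,2h+1]` (0-indexed below) — equals `P_321(π)`. -/
theorem limiting_order_321_pattern_probability
    {Ω : Type*} [MeasurableSpace Ω] (μ : Measure Ω) [IsProbabilityMeasure μ]
    (B : ℤ → Ω → Bool) (hmeas : ∀ x : ℤ, Measurable (B x))
    (hindep : iIndepFun B μ)
    (hfair : ∀ x : ℤ, μ {ω | B x ω = true} = 1 / 2)
    {h : ℕ} (hh : 1 ≤ h) (π : Equiv.Perm (Fin (2 * h + 1))) (hπ : Avoids perm321 π) :
    μ {ω | ∀ i j : Fin (2 * h + 1),
        ordRel B ω (((i : ℕ) : ℤ) - (h : ℤ)) (((j : ℕ) : ℤ) - (h : ℤ)) ↔ π i ≤ π j}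
      = ENNReal.ofReal (P321 π) :=
  limiting_order_321_pattern_probability_general μ B hmeas hindep hfair π
end

section
/- Let μ be a shift-invariant probability measure on the set LO(ℤ) of linear orders on ℤ, i.e., μ(O^s(π)) = μ(O(π)) for every finite permutation π and every s ∈ ℤ. Then for every h ≥ 1, every permutation π of size 2h+1, and every n ≥ 2h+1: Σ_{ρ ∈ Sⁿ} μ(O(ρ)) · c-occ(π, ρ⁻¹) = (n − 2h) · μ(O^{−(h+1)}(π⁻¹)), where the sum ranges over all permutations ρ of size n. -/
/-!
Fix a linear order `f` on `ℤ`. Exactly one `ρ ∈ Sⁿ` has `f ∈ O(ρ)`, namely the permutation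
sorting `1, …, n` by `f`, so the events `O(ρ)` are disjoint. Moreover, for that `ρ`, the pattern
`π` occurs in `ρ⁻¹` at position `i` exactly when `f ∈ O^i(π⁻¹)`. Counting occurrences window by
window therefore turns the left-hand side into `Σ_{i ≤ n - |π|} μ(O^i(π⁻¹))`, and by shift
invariance all `n - 2h` terms equal `μ(O^{-(h+1)}(π⁻¹))`.
-/

open Finset Filter
open scoped Topology Classical

open MeasureTheory
open scoped ENNReal

/-- `f : ℤ → ℤ → Bool` encodes a linear (total) order on `ℤ`. -/
def IsLinOrdB (f : ℤ → ℤ → Bool) : Prop :=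
  (∀ x, f x x = true) ∧ (∀ x y, f x y = true → f y x = true → x = y) ∧
  (∀ x y z, f x y = true → f y z = true → f x z = true) ∧
  (∀ x y, f x y = true ∨ f y x = true)

/-- The set `LO(ℤ)` of linear orders on `ℤ`, as a (measurable) subtype of the product
space `{0,1}^(ℤ×ℤ)` with the product σ-algebra. -/
abbrev LinOrdZ : Type := {f : ℤ → ℤ → Bool // IsLinOrdB f}

/-- The cylinder event `O^s(π) = {≼ : π₁+s ≼ π₂+s ≼ ⋯ ≼ π_k+s}` (here `π` is 0-indexed,
so its 1-indexed values are `π i + 1`). -/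
def Oset {k : ℕ} (π : Equiv.Perm (Fin k)) (s : ℤ) : Set LinOrdZ :=
  {f | ∀ (i : ℕ) (h : i + 1 < k),
    f.1 (((π ⟨i, by omega⟩ : Fin k) : ℤ) + 1 + s) (((π ⟨i + 1, h⟩ : Fin k) : ℤ) + 1 + s)
      = true}

/-- A copy of `ℤ` carrying the order `f`, so that Mathlib's order theory (`StrictMono`,
`Tuple.sort`) applies to it. -/
def LinOrdZ.Carrier (_ : LinOrdZ) : Type := ℤ

def LinOrdZ.toCarrier (f : LinOrdZ) : ℤ → f.Carrier := id

noncomputable instance (f : LinOrdZ) : LinearOrder f.Carrier where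
  le x y := f.1 x y = true
  le_refl := f.2.1
  le_trans := f.2.2.2.1
  le_antisymm := f.2.2.1
  le_total := f.2.2.2.2
  toDecidableLE := Classical.decRel _

theorem LinOrdZ.toCarrier_injective (f : LinOrdZ) : Function.Injective f.toCarrier :=
  fun _ _ h => h

theorem Equiv.Perm.strictMono_comp_inv_iff {α β : Type*} [LinearOrder α] [Preorder β]
    (σ : Equiv.Perm α) (g : α → β) :
    StrictMono (g ∘ ⇑σ⁻¹) ↔ ∀ a b, g a < g b ↔ σ a < σ b := by
  refine ⟨fun hg a b => ?_, fun H x y hxy => ?_⟩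
  · simpa using hg.lt_iff_lt (a := σ a) (b := σ b)
  · exact (H _ _).2 (by simpa using hxy)

theorem mem_Oset_iff_monotone {k : ℕ} (τ : Equiv.Perm (Fin k)) (s : ℤ) (f : LinOrdZ) :
    f ∈ Oset τ s ↔ Monotone fun a => f.toCarrier (τ a + 1 + s) := by
  cases k with
  | zero => exact iff_of_true (fun i hi => absurd hi (by omega)) (Subsingleton.monotone _)
  | succ k =>
    rw [Fin.monotone_iff_le_succ]
    exact ⟨fun hf i => hf i i.succ.isLt, fun hf i hi => hf ⟨i, by omega⟩⟩

theorem mem_Oset_iff_strictMono {k : ℕ} (τ : Equiv.Perm (Fin k)) (s : ℤ) (f : LinOrdZ) :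
    f ∈ Oset τ s ↔ StrictMono fun a => f.toCarrier (τ a + 1 + s) := by
  rw [mem_Oset_iff_monotone]
  refine ⟨fun hf => hf.strictMono_of_injective fun a b hab => τ.injective ?_,
    StrictMono.monotone⟩
  exact Fin.ext (by simpa using f.toCarrier_injective hab)

theorem mem_Oset_zero_iff_eq_sort {n : ℕ} (ρ : Equiv.Perm (Fin n)) (f : LinOrdZ) :
    f ∈ Oset ρ 0 ↔ ρ = Tuple.sort fun v : Fin n => f.toCarrier (v + 1) := by
  rw [Tuple.eq_sort_iff, mem_Oset_iff_monotone]
  simp only [add_zero]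
  refine ⟨fun hf => ⟨hf, fun i j hij hv => absurd ?_ hij.ne⟩, fun hf => hf.1⟩
  exact ρ.injective (Fin.ext (by simpa using f.toCarrier_injective hv))

theorem pairwiseDisjoint_Oset_zero {n : ℕ} (S : Set (Equiv.Perm (Fin n))) :
    S.PairwiseDisjoint fun ρ => Oset ρ 0 := fun ρ _ ρ' _ hne =>
  Set.disjoint_left.2 fun f hf hf' =>
    hne <| ((mem_Oset_zero_iff_eq_sort ρ f).1 hf).trans
      ((mem_Oset_zero_iff_eq_sort ρ' f).1 hf').symm

theorem measurableSet_Oset {k : ℕ} (τ : Equiv.Perm (Fin k)) (s : ℤ) :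
    MeasurableSet (Oset τ s) := by
  simp only [Oset, Set.ofPred_forall]
  refine .iInter fun i => .iInter fun hi => measurableSet_eq_fun ?_ measurable_const
  exact (measurable_pi_apply _).comp ((measurable_pi_apply _).comp measurable_subtype_coe)

theorem windowMatch_inv_iff_mem_Oset {k n i : ℕ} (hi : i + k ≤ n) (π : Equiv.Perm (Fin k))
    {ρ : Equiv.Perm (Fin n)} {f : LinOrdZ} (hf : f ∈ Oset ρ 0) :
    WindowMatch π ρ⁻¹ i ↔ f ∈ Oset π⁻¹ i := by
  let window (a : Fin k) : Fin n := ⟨i + a, by omega⟩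
  have hpv (a : Fin k) : pv ρ⁻¹ (i + a) = ρ⁻¹ (window a) := dif_pos (by omega)
  have hwindow (a : Fin k) :
      f.toCarrier (window a + 1) = f.toCarrier (a + 1 + i) := by
    congr 1; simp only [window]; push_cast; ring
  have hρ : ∀ v w : Fin n, f.toCarrier (v + 1) < f.toCarrier (w + 1) ↔ ρ⁻¹ v < ρ⁻¹ w := by
    rw [← Equiv.Perm.strictMono_comp_inv_iff, inv_inv]
    have hmono := (mem_Oset_iff_strictMono ρ 0 f).1 hf
    simp only [add_zero] at hmono
    exact hmono
  rw [mem_Oset_iff_strictMono]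
  change _ ↔ StrictMono ((fun a : Fin k => f.toCarrier (a + 1 + i)) ∘ ⇑π⁻¹)
  rw [Equiv.Perm.strictMono_comp_inv_iff]
  refine forall_congr' fun a => forall_congr' fun b => ?_
  rw [hpv, hpv, ← hwindow, ← hwindow, hρ, Fin.val_fin_lt]

theorem biUnion_windowMatch_inv_Oset_zero {k n i : ℕ} (hi : i + k ≤ n)
    (π : Equiv.Perm (Fin k)) :
    ⋃ ρ ∈ univ.filter fun ρ : Equiv.Perm (Fin n) => WindowMatch π ρ⁻¹ i, Oset ρ 0
      = Oset π⁻¹ i := by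
  ext f
  set ρ₀ := Tuple.sort fun v : Fin n => f.toCarrier (v + 1)
  have hf₀ : f ∈ Oset ρ₀ 0 := (mem_Oset_zero_iff_eq_sort ρ₀ f).2 rfl
  simp only [Set.mem_iUnion, mem_filter, mem_univ, true_and, exists_prop,
    mem_Oset_zero_iff_eq_sort _ f, exists_eq_right]
  exact windowMatch_inv_iff_mem_Oset hi π hf₀

theorem sum_measure_Oset_zero_windowMatch_inv {k n i : ℕ} (hi : i + k ≤ n)
    (π : Equiv.Perm (Fin k)) (μ : Measure LinOrdZ) :
    ∑ ρ : Equiv.Perm (Fin n) with WindowMatch π ρ⁻¹ i, μ (Oset ρ 0) = μ (Oset π⁻¹ i) := by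
  rw [← biUnion_windowMatch_inv_Oset_zero hi π,
    measure_biUnion_finset (pairwiseDisjoint_Oset_zero _) fun ρ _ => measurableSet_Oset ρ 0]

theorem cOcc_eq_card_filter_range {k n : ℕ} (hk : 0 < k) (π : Equiv.Perm (Fin k))
    (σ : Equiv.Perm (Fin n)) :
    cOcc π σ = #{i ∈ range (n + 1 - k) | WindowMatch π σ i} := by
  unfold cOcc cOccWin
  congr 1
  ext i
  simp only [mem_filter, mem_range, zero_le, true_and, ← and_assoc]
  exact and_congr_left fun _ => by omega

theorem sum_measure_Oset_zero_mul_cOcc_inv {k n : ℕ} (hk : 0 < k) (π : Equiv.Perm (Fin k))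
    (μ : Measure LinOrdZ) :
    ∑ ρ : Equiv.Perm (Fin n), μ (Oset ρ 0) * (cOcc π ρ⁻¹ : ℝ≥0∞)
      = ∑ i ∈ range (n + 1 - k), μ (Oset π⁻¹ i) := by
  calc ∑ ρ : Equiv.Perm (Fin n), μ (Oset ρ 0) * (cOcc π ρ⁻¹ : ℝ≥0∞)
      = ∑ ρ : Equiv.Perm (Fin n), ∑ i ∈ range (n + 1 - k),
          if WindowMatch π ρ⁻¹ i then μ (Oset ρ 0) else 0 := by
        simp only [cOcc_eq_card_filter_range hk, ← sum_filter, sum_const, nsmul_eq_mul, mul_comm]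
    _ = ∑ i ∈ range (n + 1 - k), ∑ ρ : Equiv.Perm (Fin n) with WindowMatch π ρ⁻¹ i,
          μ (Oset ρ 0) := by
        rw [sum_comm]; simp only [sum_filter]
    _ = ∑ i ∈ range (n + 1 - k), μ (Oset π⁻¹ i) :=
        sum_congr rfl fun i hi =>
          sum_measure_Oset_zero_windowMatch_inv (by rw [mem_range] at hi; omega) π μ

theorem shift_invariant_cylinder_identity_general
    (μ : Measure LinOrdZ)
    (hshift : ∀ (k : ℕ), 1 ≤ k → ∀ (π : Equiv.Perm (Fin k)) (s : ℤ),
      μ (Oset π s) = μ (Oset π 0))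
    {h : ℕ} (π : Equiv.Perm (Fin (2 * h + 1)))
    {n : ℕ} :
    ∑ ρ : Equiv.Perm (Fin n), μ (Oset ρ 0) * (cOcc π ρ⁻¹ : ℝ≥0∞)
      = ((n - 2 * h : ℕ) : ℝ≥0∞) * μ (Oset π⁻¹ (-((h : ℤ) + 1))) := by
  have hconst (s : ℤ) : μ (Oset π⁻¹ s) = μ (Oset π⁻¹ (-((h : ℤ) + 1))) := by
    rw [hshift _ (by omega), hshift _ (by omega) _ (-((h : ℤ) + 1))]
  rw [sum_measure_Oset_zero_mul_cOcc_inv (by omega), sum_congr rfl fun (i : ℕ) _ => hconst i,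
    sum_const, card_range, nsmul_eq_mul, show n + 1 - (2 * h + 1) = n - 2 * h by omega]

/-- **Key identity in the proof of Theorem 2.32.** If `μ` is a shift-invariant probability
measure on linear orders on `ℤ`, then for every `h ≥ 1`, every `π` of size `2h+1` and every
`n ≥ 2h+1`, `Σ_{ρ ∈ Sⁿ} μ(O(ρ)) · c-occ(π,ρ⁻¹) = (n − 2h) · μ(O^{−(h+1)}(π⁻¹))`. -/
theorem shift_invariant_cylinder_identity
    (μ : Measure LinOrdZ) [IsProbabilityMeasure μ]
    (hshift : ∀ (k : ℕ), 1 ≤ k → ∀ (π : Equiv.Perm (Fin k)) (s : ℤ),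
      μ (Oset π s) = μ (Oset π 0))
    {h : ℕ} (hh : 1 ≤ h) (π : Equiv.Perm (Fin (2 * h + 1)))
    {n : ℕ} (hn : 2 * h + 1 ≤ n) :
    ∑ ρ : Equiv.Perm (Fin n), μ (Oset ρ 0) * (cOcc π ρ⁻¹ : ℝ≥0∞)
      = ((n - 2 * h : ℕ) : ℝ≥0∞) * μ (Oset π⁻¹ (-((h : ℤ) + 1))) :=
  shift_invariant_cylinder_identity_general μ hshift π
end
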